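/- arXiv:2205.07607 — 5 statements merged into one kernel-verified Lean document; each statement's English description precedes it below -/
import Mathlib

section
/- The angular numerical range W'(C) = {x* C x : x ∈ ℂⁿ, x ≠ 0} of any square complex matrix C is a convex cone in ℂ. -/
open Matrix Complex Real

noncomputable section

/-- The numerical range (field of values) of a square complex matrix. -/
def numRange {ι : Type*} [Fintype ι] (C : Matrix ι ι ℂ) : Set ℂ :=
  {z | ∃ x : ι → ℂ, star x ⬝ᵥ x = 1 ∧ z = star x ⬝ᵥ C.mulVec x}

/-- A matrix is sectorial if 0 is not in its numerical range. -/
def Sectorial {ι : Type*} [Fintype ι] (C : Matrix ι ι ℂ) : Prop := (0 : ℂ) ∉ numRange C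

/-- A matrix is semi-sectorial if its numerical range lies in a closed half-plane
through the origin. -/
def SemiSectorial {ι : Type*} [Fintype ι] (C : Matrix ι ι ℂ) : Prop :=
  ∃ θ : ℝ, ∀ x : ι → ℂ, 0 ≤ (Complex.exp (-(θ : ℂ) * Complex.I) * (star x ⬝ᵥ C.mulVec x)).re

/-- A matrix is quasi-sectorial if it is unitarily similar to `diag(0, Cs)` with `Cs`
sectorial (equivalently, its angular numerical range is a salient cone of angle `< π`). -/
def QuasiSectorial {ι : Type*} [Fintype ι] [DecidableEq ι] (C : Matrix ι ι ℂ) : Prop :=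
  ∃ (k r : ℕ) (e : (Fin k ⊕ Fin r) ≃ ι) (U : Matrix ι ι ℂ) (Cs : Matrix (Fin r) (Fin r) ℂ),
    Uᴴ * U = 1 ∧ U * Uᴴ = 1 ∧ Sectorial Cs ∧
    C = U * (Matrix.reindex e e (Matrix.fromBlocks 0 0 0 Cs)) * Uᴴ

/-- The canonical middle factor of the generalized sectorial decomposition:
`diag(0_{n0}, diag(e^{jθ_1},…,e^{jθ_m}), E)` where `E` consists of `p` copies of the
`2×2` block `e^{jθ0} [[1,2],[0,1]]`. -/
def gsdMat (n0 m p : ℕ) (θ : Fin m → ℝ) (θ0 : ℝ) :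
    Matrix ((Fin n0 ⊕ Fin m) ⊕ (Fin 2 × Fin p)) ((Fin n0 ⊕ Fin m) ⊕ (Fin 2 × Fin p)) ℂ :=
  Matrix.fromBlocks
    (Matrix.fromBlocks 0 0 0 (Matrix.diagonal fun i => Complex.exp ((θ i : ℂ) * Complex.I)))
    0 0
    (Matrix.blockDiagonal fun _ : Fin p => Complex.exp ((θ0 : ℂ) * Complex.I) • (!![1, 2; 0, 1] : Matrix (Fin 2) (Fin 2) ℂ))

/-- `HasPhases C φ` says that `φ` (nonincreasing, of length `r = rank C`) is a vector of
phases of the semi-sectorial matrix `C`, arising from a generalized sectorial decomposition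
`C = Tᴴ (diag(0, D, E)) T`: the entries of `φ` are the angles `θ_1 ≥ … ≥ θ_m` of `D`
together with `p` copies of each of `θ0 ± π/2`. -/
def HasPhases {ι : Type*} [Fintype ι] [DecidableEq ι] (C : Matrix ι ι ℂ) {r : ℕ}
    (φ : Fin r → ℝ) : Prop :=
  Antitone φ ∧
  ∃ (n0 m p : ℕ) (θ : Fin m → ℝ) (θ0 : ℝ)
    (e : ((Fin n0 ⊕ Fin m) ⊕ (Fin 2 × Fin p)) ≃ ι) (T : Matrix ι ι ℂ),
    IsUnit T.det ∧
    (∀ i, θ0 - π/2 ≤ θ i ∧ θ i ≤ θ0 + π/2) ∧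
    C = Tᴴ * (Matrix.reindex e e (gsdMat n0 m p θ θ0)) * T ∧
    Multiset.map φ Finset.univ.val =
      Multiset.map θ Finset.univ.val + Multiset.replicate p (θ0 + π/2)
        + Multiset.replicate p (θ0 - π/2)

/-- `B` is the Moore–Penrose pseudoinverse of `A`. -/
def IsMoorePenrose {k l : Type*} [Fintype k] [Fintype l]
    (A : Matrix k l ℂ) (B : Matrix l k ℂ) : Prop :=
  A * B * A = A ∧ B * A * B = B ∧ (A * B)ᴴ = A * B ∧ (B * A)ᴴ = B * A

/-- `Majorized x y` : the real vector `x` is majorized by `y`. -/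
def Majorized {r : ℕ} (x y : Fin r → ℝ) : Prop :=
  (∀ A : Finset (Fin r), ∃ B : Finset (Fin r), B.card = A.card ∧ ∑ i ∈ A, x i ≤ ∑ i ∈ B, y i)
  ∧ ∑ i, x i = ∑ i, y i


/-- The angular numerical range (angular field of values) of a square complex matrix. -/
def angularNumRange {ι : Type*} [Fintype ι] (C : Matrix ι ι ℂ) : Set ℂ :=
  {z | ∃ x : ι → ℂ, x ≠ 0 ∧ z = star x ⬝ᵥ C.mulVec x}

/-!
Write `q x = xᴴ C x`, so that `q (x + c • y) = q x + |c|² q y + c (xᴴ C y) + c̄ (yᴴ C x)`.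
For any direction `d ≠ 0` there is a unimodular `u` making the cross term
`u (xᴴ C y) + ū (yᴴ C x)` a nonnegative real multiple `μ d`: relative to `d`, its imaginary part
is that of `u` times a fixed number. With `d = z + w = q x + q y` this gives
`q (x + u • y) = (1 + μ) (z + w)`, and rescaling removes the factor `1 + μ`. If `z + w = 0 ≠ z`,
take `d = z` and `c = t u` with `t > 0` solving `t² = μ t + 1`: then `q (x + c • y) = 0`, while
`x + c • y = 0` would force `z = t² w = -t² z`.
-/

theorem exists_star_mul_self_eq_one_mul_add_star_mul_eq_ofReal (a b : ℂ) :
    ∃ u : ℂ, star u * u = 1 ∧ ∃ μ : ℝ, 0 ≤ μ ∧ u * a + star u * b = μ := by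
  set D := a - star b
  set u := exp ((-arg D : ℝ) * I)
  have hu : star u * u = 1 := by
    rw [Complex.star_def, conj_mul', norm_exp_ofReal_mul_I, ofReal_one, one_pow]
  have huD : u * D = ‖D‖ := by
    conv_lhs => rw [← norm_mul_exp_arg_mul_I D]
    rw [mul_left_comm, ← Complex.exp_add]
    simp
  -- `u * a + star u * b` is real because its imaginary part is that of `u * (a - star b)`
  have hconj : star (u * a + star u * b) = u * a + star u * b := by
    have h : star (u * D) = u * D := by rw [huD]; exact Complex.conj_ofReal _
    simp only [D, star_mul', star_sub, star_star] at h
    simp only [star_add, star_mul', star_star]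
    linear_combination h
  obtain ⟨r, hr⟩ := conj_eq_iff_real.mp hconj
  rcases le_total 0 r with hr0 | hr0
  · exact ⟨u, hu, r, hr0, hr⟩
  · refine ⟨-u, by rw [star_neg, neg_mul_neg, hu], -r, neg_nonneg.mpr hr0, ?_⟩
    rw [star_neg, ofReal_neg, ← hr]
    ring

theorem exists_star_mul_self_eq_one_mul_add_star_mul_eq_ofReal_mul (a b : ℂ) {d : ℂ} (hd : d ≠ 0) :
    ∃ u : ℂ, star u * u = 1 ∧ ∃ μ : ℝ, 0 ≤ μ ∧ u * a + star u * b = μ * d := by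
  obtain ⟨u, hu, μ, hμ, h⟩ :=
    exists_star_mul_self_eq_one_mul_add_star_mul_eq_ofReal (a / d) (b / d)
  refine ⟨u, hu, μ, hμ, ?_⟩
  rw [← h]
  field_simp

theorem exists_pos_sq_eq_mul_add_one (μ : ℝ) : ∃ t : ℝ, 0 < t ∧ t ^ 2 = μ * t + 1 := by
  have hs : √(μ ^ 2 + 4) ^ 2 = μ ^ 2 + 4 := Real.sq_sqrt (by positivity)
  have hμ : |μ| < √(μ ^ 2 + 4) := by
    rw [← Real.sqrt_sq_eq_abs]
    exact Real.sqrt_lt_sqrt (sq_nonneg μ) (by linarith)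
  refine ⟨(μ + √(μ ^ 2 + 4)) / 2, by linarith [neg_abs_le μ], by linear_combination hs / 4⟩

section AngularNumRange

variable {ι : Type*} [Fintype ι] (C : Matrix ι ι ℂ)

theorem star_smul_dotProduct_mulVec_smul (c : ℂ) (x : ι → ℂ) :
    star (c • x) ⬝ᵥ C *ᵥ (c • x) = star c * c * (star x ⬝ᵥ C *ᵥ x) := by
  simp only [star_smul, mulVec_smul, smul_dotProduct, dotProduct_smul, smul_eq_mul]
  ring

theorem star_add_smul_dotProduct_mulVec_add_smul (x y : ι → ℂ) (c : ℂ) :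
    star (x + c • y) ⬝ᵥ C *ᵥ (x + c • y) =
      star x ⬝ᵥ C *ᵥ x + star c * c * (star y ⬝ᵥ C *ᵥ y)
        + c * (star x ⬝ᵥ C *ᵥ y) + star c * (star y ⬝ᵥ C *ᵥ x) := by
  simp only [star_add, mulVec_add, add_dotProduct, dotProduct_add, star_smul, mulVec_smul,
    smul_dotProduct, dotProduct_smul, smul_eq_mul]
  ring

variable {C}

theorem ofReal_mul_mem_angularNumRange {z : ℂ} (hz : z ∈ angularNumRange C) {c : ℝ}
    (hc : 0 < c) : (c : ℂ) * z ∈ angularNumRange C := by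
  obtain ⟨x, hx, rfl⟩ := hz
  refine ⟨(√c : ℂ) • x, smul_ne_zero (by exact_mod_cast (Real.sqrt_pos.mpr hc).ne') hx, ?_⟩
  rw [star_smul_dotProduct_mulVec_smul, Complex.star_def, conj_ofReal, ← ofReal_mul,
    Real.mul_self_sqrt hc.le]

theorem mem_angularNumRange_of_eq_ofReal_mul {x : ι → ℂ} (hx : x ≠ 0) {c : ℝ} (hc : 0 < c)
    {z : ℂ} (h : star x ⬝ᵥ C *ᵥ x = c * z) : z ∈ angularNumRange C := by
  have := ofReal_mul_mem_angularNumRange ⟨x, hx, h.symm⟩ (inv_pos.mpr hc)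
  rwa [← mul_assoc, ← ofReal_mul, inv_mul_cancel₀ hc.ne', ofReal_one, one_mul] at this

theorem add_mem_angularNumRange_of_add_ne_zero {z w : ℂ} (hz : z ∈ angularNumRange C)
    (hw : w ∈ angularNumRange C) (hzw : z + w ≠ 0) : z + w ∈ angularNumRange C := by
  obtain ⟨x, -, rfl⟩ := hz
  obtain ⟨y, -, rfl⟩ := hw
  obtain ⟨u, hu, μ, hμ, hphase⟩ :=
    exists_star_mul_self_eq_one_mul_add_star_mul_eq_ofReal_mul (star x ⬝ᵥ C *ᵥ y)
      (star y ⬝ᵥ C *ᵥ x) hzw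
  have hq : star (x + u • y) ⬝ᵥ C *ᵥ (x + u • y) =
      ((1 + μ : ℝ) : ℂ) * (star x ⬝ᵥ C *ᵥ x + star y ⬝ᵥ C *ᵥ y) := by
    rw [star_add_smul_dotProduct_mulVec_add_smul, hu]
    push_cast
    linear_combination hphase
  have hpos : (0 : ℝ) < 1 + μ := by linarith
  refine mem_angularNumRange_of_eq_ofReal_mul ?_ hpos hq
  rintro hzero
  rw [hzero, star_zero, zero_dotProduct] at hq
  exact hzw ((mul_eq_zero.mp hq.symm).resolve_left (by exact_mod_cast hpos.ne'))

theorem zero_mem_angularNumRange_of_mem_of_neg_mem {z : ℂ} (hz0 : z ≠ 0)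
    (hz : z ∈ angularNumRange C) (hnz : -z ∈ angularNumRange C) : 0 ∈ angularNumRange C := by
  obtain ⟨x, -, hx⟩ := hz
  obtain ⟨y, -, hy⟩ := hnz
  obtain ⟨u, hu, μ, -, hphase⟩ :=
    exists_star_mul_self_eq_one_mul_add_star_mul_eq_ofReal_mul (star x ⬝ᵥ C *ᵥ y)
      (star y ⬝ᵥ C *ᵥ x) hz0
  obtain ⟨t, ht, hroot⟩ := exists_pos_sq_eq_mul_add_one μ
  have hstar : star ((t : ℂ) * u) = t * star u := by
    rw [star_mul', Complex.star_def, conj_ofReal, mul_comm]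
  have hc : star ((t : ℂ) * u) * ((t : ℂ) * u) = (t : ℂ) ^ 2 := by
    rw [hstar, mul_mul_mul_comm, hu, mul_one, sq]
  refine ⟨x + ((t : ℂ) * u) • y, ?_, ?_⟩
  · intro hzero
    have hxy : x = (-((t : ℂ) * u)) • y := by
      rw [neg_smul]; exact eq_neg_of_add_eq_zero_left hzero
    have h : z = (t : ℂ) ^ 2 * -z := by
      rw [hy, hx, hxy, star_smul_dotProduct_mulVec_smul, star_neg, neg_mul_neg, hc]
    have h1 : ((1 + t ^ 2 : ℝ) : ℂ) * z = 0 := by push_cast; linear_combination h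
    have h1t : (0 : ℝ) < 1 + t ^ 2 := by positivity
    exact hz0 ((mul_eq_zero.mp h1).resolve_left (by exact_mod_cast h1t.ne'))
  · rw [star_add_smul_dotProduct_mulVec_add_smul, hc, ← hx, ← hy]
    have hrootC : (t : ℂ) ^ 2 = μ * t + 1 := by exact_mod_cast hroot
    rw [hstar]
    linear_combination z * hrootC - (t : ℂ) * hphase

end AngularNumRange

/-- the angular numerical range of any square complex matrix is a convex cone:
it is closed under addition and under multiplication by positive real scalars. -/
theorem angularNumRange_convexCone {n : ℕ} (C : Matrix (Fin n) (Fin n) ℂ) :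
    (∀ z ∈ angularNumRange C, ∀ w ∈ angularNumRange C, z + w ∈ angularNumRange C) ∧
    (∀ z ∈ angularNumRange C, ∀ c : ℝ, 0 < c → (c : ℂ) * z ∈ angularNumRange C) := by
  refine ⟨fun z hz w hw => ?_, fun z hz c hc => ofReal_mul_mem_angularNumRange hz hc⟩
  by_cases hz0 : z = 0
  · rwa [hz0, zero_add]
  by_cases hzw : z + w = 0
  · rw [hzw]
    rw [eq_neg_of_add_eq_zero_right hzw] at hw
    exact zero_mem_angularNumRange_of_mem_of_neg_mem hz0 hz hw
  · exact add_mem_angularNumRange_of_add_ne_zero hz hw hzw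

end
end

section
/- If C ∈ ℂ^{n×n} is sectorial, i.e., 0 ∉ W(C) where W(C) is the numerical range, then there exist an invertible matrix T and a diagonal unitary matrix D such that C = T* D T. -/
open Matrix Complex Real

noncomputable section

section AuxSectorial

variable {n : ℕ}

lemma quad_expand (M : Matrix (Fin n) (Fin n) ℂ) (x y : Fin n → ℂ) (a b : ℂ) :
    star (a • x + b • y) ⬝ᵥ M *ᵥ (a • x + b • y) =
      (starRingEnd ℂ) a * a * (star x ⬝ᵥ M *ᵥ x) + (starRingEnd ℂ) a * b * (star x ⬝ᵥ M *ᵥ y)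
      + (starRingEnd ℂ) b * a * (star y ⬝ᵥ M *ᵥ x) + (starRingEnd ℂ) b * b * (star y ⬝ᵥ M *ᵥ y) := by
  simp [star_add, star_smul, add_dotProduct, dotProduct_add, smul_dotProduct, dotProduct_smul,
    mulVec_add, mulVec_smul, smul_eq_mul]
  ring

def nrm (x : Fin n → ℂ) : ℝ := ∑ i, Complex.normSq (x i)

lemma dot_self_eq (x : Fin n → ℂ) : star x ⬝ᵥ x = (nrm x : ℂ) := by
  simp [dotProduct, nrm, Complex.normSq_eq_conj_mul_self]

lemma nrm_pos {x : Fin n → ℂ} (hx : x ≠ 0) : 0 < nrm x := by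
  obtain ⟨i, hi⟩ := Function.ne_iff.mp hx
  exact Finset.sum_pos' (fun j _ => Complex.normSq_nonneg _)
    ⟨i, Finset.mem_univ i, Complex.normSq_pos.2 hi⟩

lemma smul_quad (M : Matrix (Fin n) (Fin n) ℂ) (x : Fin n → ℂ) (a : ℂ) :
    star (a • x) ⬝ᵥ M *ᵥ (a • x) = (starRingEnd ℂ) a * a * (star x ⬝ᵥ M *ᵥ x) := by
  simp [star_smul, smul_dotProduct, mulVec_smul, dotProduct_smul, smul_eq_mul]; ring

lemma core_ivt (M : Matrix (Fin n) (Fin n) ℂ) (p q : Fin n → ℂ)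
    (hp : star p ⬝ᵥ p = 1) (hq : star q ⬝ᵥ q = 1)
    (hp1 : star p ⬝ᵥ M *ᵥ p = 1) (hq0 : star q ⬝ᵥ M *ᵥ q = 0)
    {a : ℝ} (ha0 : 0 ≤ a) (ha1 : a ≤ 1) :
    ∃ z : Fin n → ℂ, star z ⬝ᵥ z = 1 ∧ star z ⬝ᵥ M *ᵥ z = (a : ℂ) := by
  have hnp : nrm p = 1 := by
    have := (dot_self_eq p).symm.trans hp
    exact_mod_cast this
  have hnq : nrm q = 1 := by
    have := (dot_self_eq q).symm.trans hq
    exact_mod_cast this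
  have hp0 : p ≠ 0 := by
    intro h; rw [h] at hnp; simp [nrm] at hnp
  have hq0' : q ≠ 0 := by
    intro h; rw [h] at hnq; simp [nrm] at hnq
  set w1 := star p ⬝ᵥ M *ᵥ q with hw1
  set w2 := star q ⬝ᵥ M *ᵥ p with hw2
  set δ : ℂ := w1 - (starRingEnd ℂ) w2 with hδ
  set c : ℂ := Complex.exp (-(δ.arg : ℂ) * Complex.I) with hc
  have hcabs : ‖c‖ = 1 := by
    rw [hc]
    rw [show -(δ.arg : ℂ) * Complex.I = ((-δ.arg : ℝ) : ℂ) * Complex.I by push_cast; ring]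
    exact Complex.norm_exp_ofReal_mul_I _
  have hcδ : c * δ = (‖δ‖ : ℂ) := by
    conv_lhs => rw [← Complex.norm_mul_exp_arg_mul_I δ]
    rw [hc, mul_left_comm, ← Complex.exp_add]
    simp
  -- g is real
  set g : ℂ := c * w1 + (starRingEnd ℂ) c * w2 with hg
  have hgim : g.im = 0 := by
    have h1 : g = c * δ + ((starRingEnd ℂ) c * w2 + c * (starRingEnd ℂ) w2) := by
      rw [hg, hδ]; ring
    have h2 : ((starRingEnd ℂ) c * w2 + c * (starRingEnd ℂ) w2).im = 0 := by
      have : (starRingEnd ℂ) c * w2 + c * (starRingEnd ℂ) w2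
          = (starRingEnd ℂ) (c * (starRingEnd ℂ) w2) + c * (starRingEnd ℂ) w2 := by
        rw [_root_.map_mul, Complex.conj_conj]
        try ring
      rw [this, Complex.add_im, Complex.conj_im]
      try ring
    rw [h1, Complex.add_im, h2, hcδ]
    simp
  -- the path
  set v : ℝ → (Fin n → ℂ) := fun φ => ((Real.cos φ : ℂ)) • p + ((Real.sin φ : ℂ) * c) • q with hv
  have hQv : ∀ φ, star (v φ) ⬝ᵥ M *ᵥ (v φ)
      = ((Real.cos φ ^ 2 + Real.cos φ * Real.sin φ * g.re : ℝ) : ℂ) := by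
    intro φ
    rw [hv]
    rw [quad_expand M p q _ _]
    rw [hp1, hq0, ← hw1, ← hw2]
    have hconj : (starRingEnd ℂ) ((Real.sin φ : ℂ) * c) = (Real.sin φ : ℂ) * (starRingEnd ℂ) c := by
      rw [_root_.map_mul, Complex.conj_ofReal]
    rw [hconj]
    have hgre : c * w1 + (starRingEnd ℂ) c * w2 = ((g.re : ℝ) : ℂ) := by
      rw [← hg, ← Complex.re_add_im g, hgim]; simp
    rw [Complex.conj_ofReal]
    push_cast [-Complex.ofReal_cos, -Complex.ofReal_sin]
    linear_combination (Real.cos φ : ℂ) * (Real.sin φ : ℂ) * hgre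
  have hvne : ∀ φ ∈ Set.Icc 0 (Real.pi/2), v φ ≠ 0 := by
    intro φ hφ h0
    by_cases hcos : Real.cos φ = 0
    · have hsin : Real.sin φ = 1 := by
        have h1 : Real.sin φ ^ 2 = 1 := by
          have := Real.sin_sq_add_cos_sq φ; rw [hcos] at this; nlinarith
        have hs0 : 0 ≤ Real.sin φ := Real.sin_nonneg_of_nonneg_of_le_pi hφ.1
          (le_trans hφ.2 (by linarith [Real.pi_pos]))
        nlinarith
      rw [hv] at h0
      simp only [hcos, hsin] at h0
      push_cast at h0
      simp only [zero_smul, zero_add, one_mul] at h0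
      rcases smul_eq_zero.mp h0 with h | h
      · have : c ≠ 0 := by intro hh; rw [hh] at hcabs; simp at hcabs
        exact this h
      · exact hq0' h
    · -- p = μ • q
      have hμ : p = (-(Real.cos φ : ℂ)⁻¹ * ((Real.sin φ : ℂ) * c)) • q := by
        have h1 : (Real.cos φ : ℂ) • p = -(((Real.sin φ : ℂ) * c) • q) := by
          rw [hv] at h0
          linear_combination (norm := module) h0
        have hc0 : (Real.cos φ : ℂ) ≠ 0 := by exact_mod_cast hcos
        have := congrArg (fun w => (Real.cos φ : ℂ)⁻¹ • w) h1
        simp only [smul_smul, inv_mul_cancel₀ hc0, one_smul] at this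
        rw [this, smul_neg, smul_smul, ← neg_smul]
        congr 1
        ring
      have : (1 : ℂ) = 0 := by
        rw [← hp1, hμ, smul_quad, hq0, mul_zero]
      simp at this
  -- continuity and endpoint values of f
  set f : ℝ → ℝ := fun φ => (Real.cos φ ^ 2 + Real.cos φ * Real.sin φ * g.re) / nrm (v φ) with hf
  have hvcont : Continuous v := by
    apply Continuous.add
    · exact (Complex.continuous_ofReal.comp Real.continuous_cos).smul continuous_const
    · exact ((Complex.continuous_ofReal.comp Real.continuous_sin).mul continuous_const).smul
        continuous_const
  have hnrmcont : Continuous fun φ => nrm (v φ) := by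
    apply Continuous.comp' ?_ hvcont
    unfold nrm
    exact continuous_finset_sum _ fun i _ => Complex.continuous_normSq.comp (continuous_apply i)
  have hfcont : ContinuousOn f (Set.Icc 0 (Real.pi/2)) := by
    apply ContinuousOn.div
    · exact (((Real.continuous_cos.pow 2).add ((Real.continuous_cos.mul Real.continuous_sin).mul
        continuous_const))).continuousOn
    · exact hnrmcont.continuousOn
    · intro φ hφ
      exact (nrm_pos (hvne φ hφ)).ne'
  have hf0 : f 0 = 1 := by
    have hv0 : v 0 = p := by rw [hv]; simp
    rw [hf]; simp [hv0, hnp]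
  have hfpi : f (Real.pi/2) = 0 := by
    rw [hf]
    simp [Real.cos_pi_div_two]
  -- IVT
  have hsub : Set.Icc (f (Real.pi/2)) (f 0) ⊆ f '' (Set.Icc 0 (Real.pi/2)) :=
    intermediate_value_Icc' (by positivity) hfcont
  obtain ⟨φ, hφmem, hφ⟩ := hsub (by rw [hf0, hfpi]; exact ⟨ha0, ha1⟩)
  -- assemble z
  set N := nrm (v φ) with hN
  have hNpos : 0 < N := nrm_pos (hvne φ hφmem)
  have hs0 : Real.sqrt N ≠ 0 := (Real.sqrt_pos.2 hNpos).ne'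
  have key : (Real.sqrt N)⁻¹ * (Real.sqrt N)⁻¹ * N = 1 := by
    field_simp
    try exact (Real.mul_self_sqrt hNpos.le).symm
    rw [Real.sq_sqrt hNpos.le]
  simp only [hf] at hφ
  have hφ2 : Real.cos φ ^ 2 + Real.cos φ * Real.sin φ * g.re = a * N := by
    rw [div_eq_iff hNpos.ne'] at hφ
    exact hφ
  refine ⟨((Real.sqrt N : ℂ))⁻¹ • v φ, ?_, ?_⟩
  · rw [show star (((Real.sqrt N : ℂ))⁻¹ • v φ) ⬝ᵥ (((Real.sqrt N : ℂ))⁻¹ • v φ)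
      = (starRingEnd ℂ) ((Real.sqrt N : ℂ))⁻¹ * ((Real.sqrt N : ℂ))⁻¹ * (star (v φ) ⬝ᵥ v φ) by
        simp [star_smul, smul_dotProduct, dotProduct_smul, smul_eq_mul]; ring]
    rw [dot_self_eq, ← hN]
    rw [show (starRingEnd ℂ) ((Real.sqrt N : ℂ))⁻¹ = ((Real.sqrt N : ℂ))⁻¹ by
      simp [Complex.conj_ofReal]]
    exact_mod_cast key
  · rw [smul_quad, hQv]
    rw [show (starRingEnd ℂ) ((Real.sqrt N : ℂ))⁻¹ = ((Real.sqrt N : ℂ))⁻¹ by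
      simp [Complex.conj_ofReal]]
    have key2 : (Real.sqrt N)⁻¹ * (Real.sqrt N)⁻¹ * (Real.cos φ ^ 2 + Real.cos φ * Real.sin φ * g.re) = a := by
      rw [hφ2]
      nlinarith [key]
    exact_mod_cast key2
lemma numRange_convex (C : Matrix (Fin n) (Fin n) ℂ) : Convex ℝ (numRange C) := by
  intro z1 h1 z2 h2 a b ha hb hab
  by_cases hzz : z1 = z2
  · subst hzz
    rw [← add_smul, hab, one_smul]
    exact h1
  · obtain ⟨p, hp, hp1⟩ := h1
    obtain ⟨q, hq, hq1⟩ := h2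
    have hd : z1 - z2 ≠ 0 := sub_ne_zero.2 hzz
    set M := (z1 - z2)⁻¹ • (C - z2 • (1 : Matrix (Fin n) (Fin n) ℂ)) with hMdef
    have hM : ∀ x : Fin n → ℂ, star x ⬝ᵥ M *ᵥ x
        = (z1 - z2)⁻¹ * ((star x ⬝ᵥ C *ᵥ x) - z2 * (star x ⬝ᵥ x)) := by
      intro x
      rw [hMdef]
      rw [smul_mulVec, sub_mulVec, smul_mulVec, one_mulVec]
      rw [dotProduct_smul, dotProduct_sub, dotProduct_smul]
      simp [smul_eq_mul]
    have hMp : star p ⬝ᵥ M *ᵥ p = 1 := by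
      rw [hM, hp, ← hp1, mul_one]
      exact inv_mul_cancel₀ hd
    have hMq : star q ⬝ᵥ M *ᵥ q = 0 := by
      rw [hM, hq, ← hq1, mul_one]
      simp
    obtain ⟨z, hz, hza⟩ := core_ivt M p q hp hq hMp hMq ha (by linarith)
    refine ⟨z, hz, ?_⟩
    rw [hM, hz, mul_one, inv_mul_eq_iff_eq_mul₀ hd] at hza
    have hab' : (a : ℂ) + (b : ℂ) = 1 := by exact_mod_cast congrArg Complex.ofReal hab
    have : a • z1 + b • z2 = (a : ℂ) * z1 + (b : ℂ) * z2 := by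
      simp [Complex.real_smul]
    rw [this]
    linear_combination -hza + z2 * hab'

lemma numRange_isClosed (C : Matrix (Fin n) (Fin n) ℂ) : IsClosed (numRange C) := by
  have hcont1 : Continuous fun x : Fin n → ℂ => star x ⬝ᵥ x := by
    unfold dotProduct
    exact continuous_finset_sum _ fun i _ =>
      ((continuous_star.comp (continuous_apply i)).mul (continuous_apply i))
  have hcont2 : Continuous fun x : Fin n → ℂ => star x ⬝ᵥ C *ᵥ x := by
    unfold dotProduct mulVec
    exact continuous_finset_sum _ fun i _ =>
      ((continuous_star.comp (continuous_apply i)).mul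
        (continuous_finset_sum _ fun j _ => (continuous_const.mul (continuous_apply j))))
  have himg : numRange C = (fun x : Fin n → ℂ => star x ⬝ᵥ C *ᵥ x) '' {x | star x ⬝ᵥ x = 1} := by
    ext w
    simp only [numRange, Set.mem_setOf_eq, Set.mem_image, eq_comm]
    try tauto
  have hS : IsCompact {x : Fin n → ℂ | star x ⬝ᵥ x = 1} := by
    apply Metric.isCompact_of_isClosed_isBounded
    · exact isClosed_eq hcont1 continuous_const
    · apply Bornology.IsBounded.subset (Metric.isBounded_closedBall (x := 0) (r := 1))
      intro x hx
      have hnx : nrm x = 1 := by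
        have := (dot_self_eq x).symm.trans hx
        exact_mod_cast this
      simp only [Metric.mem_closedBall, dist_zero_right]
      rw [pi_norm_le_iff_of_nonneg zero_le_one]
      intro i
      have h1 : Complex.normSq (x i) ≤ 1 := by
        rw [← hnx]
        exact Finset.single_le_sum (fun j _ => Complex.normSq_nonneg (x j)) (Finset.mem_univ i)
      have : ‖x i‖ = Real.sqrt (Complex.normSq (x i)) := by
        rw [Complex.norm_def]
      rw [this, show (1:ℝ) = Real.sqrt 1 by simp]
      exact Real.sqrt_le_sqrt h1
  rw [himg]
  exact (hS.image hcont2).isClosed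

lemma exists_dir (C : Matrix (Fin n) (Fin n) ℂ) (hC : Sectorial C) (hn : 0 < n) :
    ∃ α : ℂ, ‖α‖ = 1 ∧
      ∀ x : Fin n → ℂ, star x ⬝ᵥ x = 1 → 0 < (α * (star x ⬝ᵥ C *ᵥ x)).re := by
  obtain ⟨f, u, hfu, hsep⟩ :=
    geometric_hahn_banach_point_closed (numRange_convex C) (numRange_isClosed C) hC
  have hf0 : f (0 : ℂ) = 0 := map_zero f
  set β : ℂ := ((f 1 : ℝ) : ℂ) - ((f Complex.I : ℝ) : ℂ) * Complex.I with hβdef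
  have hfβ : ∀ z : ℂ, f z = (β * z).re := by
    intro z
    have hz : z = z.re • (1 : ℂ) + z.im • Complex.I := by
      rw [Complex.real_smul, Complex.real_smul, mul_one]
      exact (Complex.re_add_im z).symm
    have h1 : f z = z.re * f 1 + z.im * f Complex.I := by
      conv_lhs => rw [hz]
      rw [map_add, f.map_smul, f.map_smul, smul_eq_mul, smul_eq_mul]
    rw [h1, hβdef]
    simp [Complex.sub_re, Complex.mul_re, Complex.ofReal_re, Complex.ofReal_im]
    ring
  have hu : 0 < u := by rw [← hf0]; exact hfu
  have hβ0 : β ≠ 0 := by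
    intro h
    set x0 : Fin n → ℂ := Pi.single (⟨0, hn⟩ : Fin n) 1 with hx0def
    have hx0 : star x0 ⬝ᵥ x0 = 1 := by
      rw [hx0def]
      simp [dotProduct, Pi.single_apply, apply_ite]
    have hw0 : (star x0 ⬝ᵥ C *ᵥ x0) ∈ numRange C := ⟨x0, hx0, rfl⟩
    have := hsep _ hw0
    rw [hfβ, h] at this
    simp only [zero_mul, Complex.zero_re] at this
    linarith
  have habs : (0:ℝ) < ‖β‖ := norm_pos_iff.mpr hβ0
  refine ⟨β / (‖β‖ : ℂ), ?_, ?_⟩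
  · rw [norm_div, Complex.norm_real, Real.norm_eq_abs, abs_of_pos habs, div_self habs.ne']
  · intro x hx
    have hmem : star x ⬝ᵥ C *ᵥ x ∈ numRange C := ⟨x, hx, rfl⟩
    have h2 := hsep _ hmem
    rw [hfβ] at h2
    have h3 : β / (‖β‖ : ℂ) * (star x ⬝ᵥ C *ᵥ x)
        = ((‖β‖)⁻¹ : ℝ) • (β * (star x ⬝ᵥ C *ᵥ x)) := by
      rw [Complex.real_smul]
      push_cast
      field_simp
      try ring
    rw [h3, Complex.smul_re]
    have : 0 < (β * (star x ⬝ᵥ C *ᵥ x)).re := lt_trans hu h2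
    positivity

lemma conjTr_quad (M : Matrix (Fin n) (Fin n) ℂ) (x : Fin n → ℂ) :
    star x ⬝ᵥ Mᴴ *ᵥ x = (starRingEnd ℂ) (star x ⬝ᵥ M *ᵥ x) := by
  simp only [dotProduct, mulVec, conjTranspose_apply, map_sum, _root_.map_mul, Pi.star_apply,
    RCLike.star_def, Finset.mul_sum]
  rw [Finset.sum_comm]
  simp [mul_comm, mul_left_comm, Complex.conj_conj]

open scoped ComplexOrder in
lemma unit_of_scale {x : Fin n → ℂ} (hx : x ≠ 0) :
    star (((Real.sqrt (nrm x) : ℂ))⁻¹ • x) ⬝ᵥ (((Real.sqrt (nrm x) : ℂ))⁻¹ • x) = 1 := by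
  have hNpos : 0 < nrm x := nrm_pos hx
  have key : (Real.sqrt (nrm x))⁻¹ * (Real.sqrt (nrm x))⁻¹ * nrm x = 1 := by
    have hs0 : Real.sqrt (nrm x) ≠ 0 := (Real.sqrt_pos.2 hNpos).ne'
    field_simp
    try exact (Real.mul_self_sqrt hNpos.le).symm
    rw [Real.sq_sqrt hNpos.le]
  rw [show star (((Real.sqrt (nrm x) : ℂ))⁻¹ • x) ⬝ᵥ (((Real.sqrt (nrm x) : ℂ))⁻¹ • x)
      = (starRingEnd ℂ) ((Real.sqrt (nrm x) : ℂ))⁻¹ * ((Real.sqrt (nrm x) : ℂ))⁻¹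
        * (star x ⬝ᵥ x) by
      simp [star_smul, smul_dotProduct, dotProduct_smul, smul_eq_mul]; ring]
  rw [dot_self_eq]
  rw [show (starRingEnd ℂ) ((Real.sqrt (nrm x) : ℂ))⁻¹ = ((Real.sqrt (nrm x) : ℂ))⁻¹ by
    simp [Complex.conj_ofReal]]
  exact_mod_cast key

open scoped ComplexOrder in
theorem sectorial_decomposition' {n : ℕ} (C : Matrix (Fin n) (Fin n) ℂ) (hC : Sectorial C) :
    ∃ (T : Matrix (Fin n) (Fin n) ℂ) (d : Fin n → ℂ),
      IsUnit T.det ∧ (∀ i, ‖d i‖ = 1) ∧ C = Tᴴ * Matrix.diagonal d * T := by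
  rcases Nat.eq_zero_or_pos n with hn | hn
  · subst hn
    exact ⟨1, fun _ => 1, by simp, fun i => by simp, Subsingleton.elim _ _⟩
  obtain ⟨α, hα1, hαpos⟩ := exists_dir C hC hn
  have hα0 : α ≠ 0 := by intro h; rw [h] at hα1; simp at hα1
  set A : Matrix (Fin n) (Fin n) ℂ := α • C with hAdef
  have hQA : ∀ x : Fin n → ℂ, star x ⬝ᵥ A *ᵥ x = α * (star x ⬝ᵥ C *ᵥ x) := by
    intro x; rw [hAdef, smul_mulVec, dotProduct_smul, smul_eq_mul]
  -- Hermitian part is positive definite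
  set H : Matrix (Fin n) (Fin n) ℂ := (2:ℂ)⁻¹ • (A + Aᴴ) with hHdef
  have hHher : H.IsHermitian := by
    rw [Matrix.IsHermitian, hHdef, conjTranspose_smul, conjTranspose_add,
      conjTranspose_conjTranspose]
    rw [show star ((2:ℂ)⁻¹) = (2:ℂ)⁻¹ by rw [star_inv₀]; norm_num]
    rw [add_comm]
  have hHq : ∀ x, star x ⬝ᵥ H *ᵥ x = (((star x ⬝ᵥ A *ᵥ x).re : ℝ) : ℂ) := by
    intro x
    rw [hHdef, smul_mulVec, dotProduct_smul, Matrix.add_mulVec, dotProduct_add,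
      conjTr_quad, Complex.add_conj, smul_eq_mul]
    push_cast
    ring
  have hHpos : H.PosDef := by
    refine Matrix.PosDef.of_dotProduct_mulVec_pos hHher (fun x hx => ?_)
    rw [hHq, Complex.zero_lt_real]
    have hNpos : 0 < nrm x := nrm_pos hx
    have hs0 : (0:ℝ) < Real.sqrt (nrm x) := Real.sqrt_pos.2 hNpos
    set y := ((Real.sqrt (nrm x) : ℂ))⁻¹ • x with hydef
    have hy : star y ⬝ᵥ y = 1 := unit_of_scale hx
    have hxy : x = ((Real.sqrt (nrm x) : ℂ)) • y := by
      rw [hydef, smul_smul, mul_inv_cancel₀ (by exact_mod_cast hs0.ne'), one_smul]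
    have hpos := hαpos y hy
    rw [← hQA y] at hpos
    have hsplit : star x ⬝ᵥ A *ᵥ x
        = ((Real.sqrt (nrm x) * Real.sqrt (nrm x) : ℝ) : ℂ) * (star y ⬝ᵥ A *ᵥ y) := by
      conv_lhs => rw [hxy]
      rw [smul_quad, Complex.conj_ofReal]
      push_cast
      ring
    rw [hsplit]
    rw [show (((Real.sqrt (nrm x) * Real.sqrt (nrm x) : ℝ)) : ℂ) * (star y ⬝ᵥ A *ᵥ y)
      = (Real.sqrt (nrm x) * Real.sqrt (nrm x) : ℝ) • (star y ⬝ᵥ A *ᵥ y) by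
      rw [Complex.real_smul]]
    rw [Complex.smul_re]
    positivity
  -- spectral decomposition of H
  set U : Matrix (Fin n) (Fin n) ℂ := (hHher.eigenvectorUnitary : Matrix (Fin n) (Fin n) ℂ)
    with hUdef
  set μ : Fin n → ℝ := hHher.eigenvalues with hμdef
  have hμpos : ∀ i, 0 < μ i := fun i => hHpos.eigenvalues_pos i
  have hHspec : H = U * Matrix.diagonal (RCLike.ofReal ∘ μ) * star U := hHher.spectral_theorem
  have hUU : star U * U = 1 := Matrix.mem_unitaryGroup_iff'.mp hHher.eigenvectorUnitary.2
  set D2 : Matrix (Fin n) (Fin n) ℂ := Matrix.diagonal (fun i => ((Real.sqrt (μ i) : ℝ) : ℂ))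
    with hD2def
  have hD2H : D2ᴴ = D2 := by
    rw [hD2def, Matrix.diagonal_conjTranspose]
    refine congrArg Matrix.diagonal ?_
    funext i
    simp [Complex.conj_ofReal]
  set S : Matrix (Fin n) (Fin n) ℂ := D2 * star U with hSdef
  have hSH : Sᴴ = U * D2 := by
    rw [hSdef, conjTranspose_mul D2 (star U), hD2H, Matrix.star_eq_conjTranspose,
      conjTranspose_conjTranspose]
  have hdd : D2 * D2 = Matrix.diagonal (RCLike.ofReal ∘ μ) := by
    rw [hD2def, Matrix.diagonal_mul_diagonal]
    refine congrArg Matrix.diagonal ?_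
    funext i
    show ((Real.sqrt (μ i) : ℝ) : ℂ) * ((Real.sqrt (μ i) : ℝ) : ℂ) = ((μ i : ℝ) : ℂ)
    rw [← Complex.ofReal_mul, Real.mul_self_sqrt (hμpos i).le]
  have hSHS : Sᴴ * S = H := by
    rw [hSH, hSdef, hHspec, Matrix.mul_assoc, Matrix.mul_assoc,
      show D2 * (D2 * star U) = D2 * D2 * star U from (Matrix.mul_assoc _ _ _).symm, hdd]
  have hUdet : IsUnit (star U).det :=
    IsUnit.of_mul_eq_one U.det (by rw [← Matrix.det_mul, hUU, Matrix.det_one])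
  have hSdet : IsUnit S.det := by
    rw [hSdef, Matrix.det_mul]
    refine IsUnit.mul ?_ hUdet
    rw [hD2def, Matrix.det_diagonal, isUnit_iff_ne_zero]
    exact Finset.prod_ne_zero_iff.2 fun i _ => by
      exact_mod_cast (Real.sqrt_pos.2 (hμpos i)).ne'
  have hSHdet : IsUnit Sᴴ.det := by
    rw [Matrix.det_conjTranspose]
    exact isUnit_star.mpr hSdet
  -- B = (Sᴴ)⁻¹ A S⁻¹
  set B : Matrix (Fin n) (Fin n) ℂ := (Sᴴ)⁻¹ * A * S⁻¹ with hBdef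
  have hA_SBS : Sᴴ * B * S = A := by
    rw [hBdef]
    simp only [Matrix.mul_assoc]
    rw [Matrix.nonsing_inv_mul S hSdet, Matrix.mul_one, ← Matrix.mul_assoc,
      Matrix.mul_nonsing_inv Sᴴ hSHdet, Matrix.one_mul]
  have hBH : Bᴴ = (Sᴴ)⁻¹ * Aᴴ * S⁻¹ := by
    rw [hBdef, conjTranspose_mul ((Sᴴ)⁻¹ * A) (S⁻¹), conjTranspose_mul ((Sᴴ)⁻¹) A,
      Matrix.conjTranspose_nonsing_inv, Matrix.conjTranspose_nonsing_inv,
      conjTranspose_conjTranspose]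
    simp only [Matrix.mul_assoc]
  have h2H : A + Aᴴ = (2:ℂ) • H := by
    rw [hHdef, smul_smul]
    norm_num
  have hBB : B + Bᴴ = (2:ℂ) • (1 : Matrix (Fin n) (Fin n) ℂ) := by
    rw [hBdef, hBH, ← Matrix.add_mul, ← Matrix.mul_add, h2H, ← hSHS]
    rw [Matrix.mul_smul, Matrix.smul_mul]
    congr 1
    rw [show (Sᴴ)⁻¹ * (Sᴴ * S) * S⁻¹ = (Sᴴ)⁻¹ * Sᴴ * (S * S⁻¹) by
      simp only [Matrix.mul_assoc]]
    rw [Matrix.nonsing_inv_mul _ hSHdet, Matrix.mul_nonsing_inv _ hSdet, Matrix.one_mul]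
  set K : Matrix (Fin n) (Fin n) ℂ := ((2:ℂ) * Complex.I)⁻¹ • (B - Bᴴ) with hKdef
  have hc2 : ((2:ℂ) * Complex.I)⁻¹ = -((2:ℂ)⁻¹) * Complex.I := by
    rw [mul_inv, Complex.inv_I]
    ring
  have hstar2I : star (((2:ℂ) * Complex.I)⁻¹) = -(((2:ℂ) * Complex.I)⁻¹) := by
    rw [star_inv₀, show star ((2:ℂ)*Complex.I) = -((2:ℂ)*Complex.I) by
      rw [Complex.star_def, _root_.map_mul, Complex.conj_I, map_ofNat]; ring, inv_neg]
  have hKher : K.IsHermitian := by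
    rw [Matrix.IsHermitian, hKdef, conjTranspose_smul, conjTranspose_sub,
      conjTranspose_conjTranspose, hstar2I]
    rw [neg_smul, ← smul_neg, neg_sub]
  have hB1K : B = 1 + Complex.I • K := by
    have hIK : Complex.I • K = (2:ℂ)⁻¹ • (B - Bᴴ) := by
      rw [hKdef, smul_smul, show Complex.I * ((2:ℂ) * Complex.I)⁻¹ = (2:ℂ)⁻¹ by
        rw [hc2]; ring_nf; rw [Complex.I_sq]; ring]
    have h1 : (1 : Matrix (Fin n) (Fin n) ℂ) = (2:ℂ)⁻¹ • (B + Bᴴ) := by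
      rw [hBB, smul_smul]
      norm_num
    rw [hIK, h1]
    module
  -- spectral decomposition of K
  set V : Matrix (Fin n) (Fin n) ℂ := (hKher.eigenvectorUnitary : Matrix (Fin n) (Fin n) ℂ)
    with hVdef
  set lam : Fin n → ℝ := hKher.eigenvalues with hlamdef
  have hKspec : K = V * Matrix.diagonal (RCLike.ofReal ∘ lam) * star V := hKher.spectral_theorem
  have hVV : star V * V = 1 := Matrix.mem_unitaryGroup_iff'.mp hKher.eigenvectorUnitary.2
  have hVV' : V * star V = 1 := Matrix.mem_unitaryGroup_iff.mp hKher.eigenvectorUnitary.2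
  set z : Fin n → ℂ := fun i => 1 + (lam i : ℂ) * Complex.I with hzdef
  have hBspec : B = V * Matrix.diagonal z * star V := by
    have hsplit : Matrix.diagonal z
        = 1 + Complex.I • Matrix.diagonal (RCLike.ofReal ∘ lam) := by
      ext i j
      rcases eq_or_ne i j with h | h
      · subst h
        rw [Matrix.diagonal_apply_eq, Matrix.add_apply, Matrix.one_apply_eq,
          Matrix.smul_apply, Matrix.diagonal_apply_eq]
        show z i = 1 + Complex.I * ((lam i : ℝ) : ℂ)
        rw [hzdef]
        ring
      · rw [Matrix.diagonal_apply_ne _ h, Matrix.add_apply, Matrix.one_apply_ne h,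
          Matrix.smul_apply, Matrix.diagonal_apply_ne _ h]
        simp
    rw [hsplit, Matrix.mul_add, Matrix.add_mul, Matrix.mul_one, hVV']
    rw [Matrix.mul_smul, Matrix.smul_mul, ← hKspec, ← hB1K]
  have hz0 : ∀ i, z i ≠ 0 := by
    intro i h
    have := congrArg Complex.re h
    simp [hzdef] at this
  set r : Fin n → ℝ := fun i => ‖z i‖ with hrdef
  have hrpos : ∀ i, 0 < r i := fun i => norm_pos_iff.mpr (hz0 i)
  set s : Fin n → ℝ := fun i => Real.sqrt (r i) with hsdef2
  have hspos : ∀ i, 0 < s i := fun i => Real.sqrt_pos.2 (hrpos i)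
  set d0 : Fin n → ℂ := fun i => z i / ((r i : ℝ) : ℂ) with hd0def
  have hd0abs : ∀ i, ‖d0 i‖ = 1 := by
    intro i
    rw [hd0def]
    show ‖z i / ((r i : ℝ) : ℂ)‖ = 1
    rw [norm_div, Complex.norm_real, Real.norm_eq_abs, abs_of_pos (hrpos i)]
    exact div_self (hrpos i).ne'
  set D : Matrix (Fin n) (Fin n) ℂ := Matrix.diagonal (fun i => ((s i : ℝ) : ℂ)) with hDdef
  have hDH : Dᴴ = D := by
    rw [hDdef, Matrix.diagonal_conjTranspose]
    refine congrArg Matrix.diagonal ?_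
    funext i
    simp [Complex.conj_ofReal]
  have hdiagsplit : Matrix.diagonal z = D * Matrix.diagonal d0 * D := by
    rw [hDdef, Matrix.diagonal_mul_diagonal, Matrix.diagonal_mul_diagonal]
    refine congrArg Matrix.diagonal ?_
    funext i
    show z i = ((s i : ℝ) : ℂ) * d0 i * ((s i : ℝ) : ℂ)
    rw [show ((s i : ℝ) : ℂ) * d0 i * ((s i : ℝ) : ℂ)
      = ((s i * s i : ℝ) : ℂ) * d0 i by push_cast; ring]
    rw [show s i * s i = r i from Real.mul_self_sqrt (hrpos i).le]
    rw [hd0def]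
    show z i = ((r i : ℝ) : ℂ) * (z i / ((r i : ℝ) : ℂ))
    have hne : ((r i : ℝ) : ℂ) ≠ 0 := by exact_mod_cast (hrpos i).ne'
    field_simp
  set T : Matrix (Fin n) (Fin n) ℂ := D * star V * S with hTdef
  have hTH : Tᴴ = Sᴴ * (V * D) := by
    rw [hTdef, conjTranspose_mul (D * star V) S, conjTranspose_mul D (star V),
      Matrix.star_eq_conjTranspose, conjTranspose_conjTranspose, hDH]
  have hA2 : A = Tᴴ * Matrix.diagonal d0 * T := by
    rw [hTH, hTdef, ← hA_SBS, hBspec, hdiagsplit]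
    simp only [Matrix.mul_assoc]
  have hTdet : IsUnit T.det := by
    rw [hTdef, Matrix.det_mul, Matrix.det_mul]
    have hVdet : IsUnit (star V).det :=
      IsUnit.of_mul_eq_one V.det (by rw [← Matrix.det_mul, hVV, Matrix.det_one])
    have hDdet : IsUnit D.det := by
      rw [hDdef, Matrix.det_diagonal, isUnit_iff_ne_zero]
      exact Finset.prod_ne_zero_iff.2 fun i _ => by exact_mod_cast (hspos i).ne'
    exact (hDdet.mul hVdet).mul hSdet
  refine ⟨T, fun i => α⁻¹ * d0 i, hTdet, ?_, ?_⟩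
  · intro i
    show ‖α⁻¹ * d0 i‖ = 1
    rw [norm_mul, norm_inv, hα1, inv_one, one_mul, hd0abs]
  · have hCA : C = α⁻¹ • A := by
      rw [hAdef, smul_smul, inv_mul_cancel₀ hα0, one_smul]
    rw [hCA, hA2]
    rw [show Matrix.diagonal (fun i => α⁻¹ * d0 i) = α⁻¹ • Matrix.diagonal d0 by
      rw [← Matrix.diagonal_smul]
      refine congrArg Matrix.diagonal ?_
      funext i
      simp [smul_eq_mul]]
    rw [Matrix.mul_smul, Matrix.smul_mul]

end AuxSectorial

/-- a sectorial matrix admits a sectorial decomposition `C = Tᴴ D T` with `T`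
invertible and `D` a diagonal unitary matrix. -/
theorem sectorial_decomposition {n : ℕ} (C : Matrix (Fin n) (Fin n) ℂ) (hC : Sectorial C) :
    ∃ (T : Matrix (Fin n) (Fin n) ℂ) (d : Fin n → ℂ),
      IsUnit T.det ∧ (∀ i, ‖d i‖ = 1) ∧ C = Tᴴ * Matrix.diagonal d * T := by
  exact sectorial_decomposition' C hC

end
end

section
/- A matrix C ∈ ℂ^{n×n} satisfies e^{-iα}C + e^{iα}C* ≥ ε C*C for some ε > 0 if and only if C admits a decomposition C = U diag(0, C_s) U* with U unitary and C_s a sectorial matrix whose numerical range lies in the open half-plane {z : Re(e^{-iα} z) > 0}. -/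
open Matrix Complex Real
open scoped ComplexOrder

noncomputable section

namespace QSproof


lemma conj_exp_neg (α : ℝ) :
    (starRingEnd ℂ) (Complex.exp (-(α:ℂ)*Complex.I)) = Complex.exp ((α:ℂ)*Complex.I) := by
  rw [← Complex.exp_conj]; congr 1; simp

/-- sum of `normSq` of entries -/
def nsqR {ι : Type*} [Fintype ι] (v : ι → ℂ) : ℝ := ∑ i, Complex.normSq (v i)

lemma nsqR_def {ι : Type*} [Fintype ι] (v : ι → ℂ) : nsqR v = ∑ i, Complex.normSq (v i) := rfl

lemma star_dp_self {ι : Type*} [Fintype ι] (v : ι → ℂ) : star v ⬝ᵥ v = (nsqR v : ℂ) := by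
  simp [dotProduct, nsqR, Complex.normSq_eq_conj_mul_self]

lemma nsqR_nonneg {ι : Type*} [Fintype ι] (v : ι → ℂ) : 0 ≤ nsqR v :=
  Finset.sum_nonneg fun i _ => Complex.normSq_nonneg _

lemma nsqR_eq_zero {ι : Type*} [Fintype ι] {v : ι → ℂ} : nsqR v = 0 ↔ v = 0 := by
  constructor
  · intro h
    funext i
    have := (Finset.sum_eq_zero_iff_of_nonneg (fun i _ => Complex.normSq_nonneg (v i))).mp h i
      (Finset.mem_univ i)
    simpa using this
  · intro h; simp [h, nsqR]

lemma nsqR_pos {ι : Type*} [Fintype ι] {v : ι → ℂ} (h : v ≠ 0) : 0 < nsqR v :=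
  lt_of_le_of_ne (nsqR_nonneg v) (fun h0 => h (nsqR_eq_zero.mp h0.symm))

lemma nsqR_smul {ι : Type*} [Fintype ι] (t : ℝ) (v : ι → ℂ) :
    nsqR ((t:ℂ) • v) = t^2 * nsqR v := by
  simp [nsqR, Complex.normSq_mul, Finset.mul_sum, pow_two, Complex.normSq_ofReal, mul_assoc]

lemma dp_conj_mul {ι κ : Type*} [Fintype ι] [Fintype κ] [DecidableEq ι] (M : Matrix ι κ ℂ) (N : Matrix ι ι ℂ)
    (v : κ → ℂ) :
    star v ⬝ᵥ (Mᴴ * N * M) *ᵥ v = star (M *ᵥ v) ⬝ᵥ N *ᵥ (M *ᵥ v) := by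
  rw [star_mulVec, ← mulVec_mulVec, ← mulVec_mulVec, dotProduct_mulVec]

lemma dp_conjTranspose_self {ι κ : Type*} [Fintype ι] [Fintype κ] [DecidableEq ι] (M : Matrix ι κ ℂ) (v : κ → ℂ) :
    star v ⬝ᵥ (Mᴴ * M) *ᵥ v = (nsqR (M *ᵥ v) : ℂ) := by
  have h := dp_conj_mul M 1 v
  rw [Matrix.mul_one, one_mulVec, star_dp_self] at h
  rw [← h]

lemma dp_conjTranspose {ι : Type*} [Fintype ι] (M : Matrix ι ι ℂ) (x : ι → ℂ) :
    star x ⬝ᵥ Mᴴ *ᵥ x = star (star x ⬝ᵥ M *ᵥ x) := by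
  rw [dotProduct_mulVec, ← star_mulVec, star_dotProduct]

lemma conj_mul_apply {ι κ : Type*} [Fintype ι] [Fintype κ] (M : Matrix ι κ ℂ)
    (N : Matrix ι ι ℂ) (p q : κ) :
    (Mᴴ * N * M) p q = star (fun i => M i p) ⬝ᵥ N *ᵥ (fun i => M i q) := by
  simp only [mul_apply, mulVec, dotProduct, conjTranspose_apply, Finset.sum_mul, Finset.mul_sum,
    Pi.star_apply, RCLike.star_def]
  rw [Finset.sum_comm]
  exact Finset.sum_congr rfl fun i _ => Finset.sum_congr rfl fun j _ => by ring

lemma key_form {ι : Type*} [Fintype ι] [DecidableEq ι] (C : Matrix ι ι ℂ) (α ε : ℝ) (x : ι → ℂ) :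
    star x ⬝ᵥ (Complex.exp (-(α:ℂ)*Complex.I) • C + Complex.exp ((α:ℂ)*Complex.I) • Cᴴ
        - (ε:ℂ) • (Cᴴ*C)) *ᵥ x
    = ((2 * (Complex.exp (-(α:ℂ)*Complex.I) * (star x ⬝ᵥ C *ᵥ x)).re
        - ε * nsqR (C *ᵥ x) : ℝ) : ℂ) := by
  have h1 : star x ⬝ᵥ Cᴴ *ᵥ x = star (star x ⬝ᵥ C *ᵥ x) := dp_conjTranspose C x
  have h2 : star x ⬝ᵥ (Cᴴ*C) *ᵥ x = (nsqR (C *ᵥ x) : ℂ) := dp_conjTranspose_self C x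
  have h3 : Complex.exp ((α:ℂ)*Complex.I) * star (star x ⬝ᵥ C *ᵥ x)
      = star (Complex.exp (-(α:ℂ)*Complex.I) * (star x ⬝ᵥ C *ᵥ x)) := by
    rw [star_mul']
    rw [RCLike.star_def, conj_exp_neg, mul_comm]
  have h4 : Complex.exp (-(α:ℂ)*Complex.I) * (star x ⬝ᵥ C *ᵥ x)
      + star (Complex.exp (-(α:ℂ)*Complex.I) * (star x ⬝ᵥ C *ᵥ x))
      = ((2 * (Complex.exp (-(α:ℂ)*Complex.I) * (star x ⬝ᵥ C *ᵥ x)).re : ℝ) : ℂ) := by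
    rw [RCLike.star_def, Complex.add_conj]
  rw [sub_mulVec, add_mulVec, dotProduct_sub, dotProduct_add, smul_mulVec,
    smul_mulVec, smul_mulVec, dotProduct_smul, dotProduct_smul, dotProduct_smul,
    smul_eq_mul, smul_eq_mul, smul_eq_mul, h1, h2, h3, h4]
  push_cast
  ring


lemma ker_lemma {ι : Type*} [Fintype ι] [DecidableEq ι] {C : Matrix ι ι ℂ} {α ε : ℝ}
    (hε : 0 < ε)
    (hq : ∀ x : ι → ℂ, ε * nsqR (C *ᵥ x) ≤
      2 * (Complex.exp (-(α:ℂ)*Complex.I) * (star x ⬝ᵥ C *ᵥ x)).re)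
    {x : ι → ℂ} (hx : C *ᵥ x = 0) : Cᴴ *ᵥ x = 0 := by
  set y : ι → ℂ := Complex.exp ((α:ℂ)*Complex.I) • (Cᴴ *ᵥ x) with hy
  set s0 : ℝ := nsqR (Cᴴ *ᵥ x) with hs0
  have hs0nn : 0 ≤ s0 := nsqR_nonneg _
  have hexp : Complex.exp (-(α:ℂ)*Complex.I) * Complex.exp ((α:ℂ)*Complex.I) = 1 := by
    rw [← Complex.exp_add, show (-(α:ℂ)*Complex.I + (α:ℂ)*Complex.I) = 0 by ring,
      Complex.exp_zero]
  have hxCy : star x ⬝ᵥ C *ᵥ y = Complex.exp ((α:ℂ)*Complex.I) * (s0 : ℂ) := by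
    have h := dp_conjTranspose_self Cᴴ x
    rw [conjTranspose_conjTranspose] at h
    rw [hy, mulVec_smul, dotProduct_smul, smul_eq_mul, mulVec_mulVec, h]
  set b : ℝ := (Complex.exp (-(α:ℂ)*Complex.I) * (star y ⬝ᵥ C *ᵥ y)).re with hb
  have hmain : ∀ t : ℝ, 0 ≤ 2 * t * s0 + 2 * t^2 * b := by
    intro t
    have h := hq (x + (t:ℂ) • y)
    have hCv : C *ᵥ (x + (t:ℂ) • y) = (t:ℂ) • (C *ᵥ y) := by
      rw [mulVec_add, hx, mulVec_smul, zero_add]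
    have hdp : star (x + (t:ℂ) • y) ⬝ᵥ ((t:ℂ) • (C *ᵥ y))
        = (t:ℂ) * (star x ⬝ᵥ C *ᵥ y) + (t:ℂ)^2 * (star y ⬝ᵥ C *ᵥ y) := by
      rw [star_add, star_smul, add_dotProduct, smul_dotProduct, dotProduct_smul,
        dotProduct_smul]
      simp only [smul_eq_mul, RCLike.star_def, Complex.conj_ofReal]
      ring
    rw [hCv, nsqR_smul, hdp] at h
    have hre : (Complex.exp (-(α:ℂ)*Complex.I) *
        ((t:ℂ) * (star x ⬝ᵥ C *ᵥ y) + (t:ℂ)^2 * (star y ⬝ᵥ C *ᵥ y))).re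
        = t * s0 + t^2 * b := by
      have hc : Complex.exp (-(α:ℂ)*Complex.I) *
          ((t:ℂ) * (star x ⬝ᵥ C *ᵥ y) + (t:ℂ)^2 * (star y ⬝ᵥ C *ᵥ y))
          = ((t * s0 : ℝ) : ℂ)
            + ((t^2 : ℝ) : ℂ) * (Complex.exp (-(α:ℂ)*Complex.I) * (star y ⬝ᵥ C *ᵥ y)) := by
        rw [hxCy]
        push_cast
        linear_combination ((t:ℂ) * (s0:ℂ)) * hexp
      rw [hc]
      rw [Complex.add_re, Complex.re_ofReal_mul, Complex.ofReal_re]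
    rw [hre] at h
    have hnn : 0 ≤ ε * (t^2 * nsqR (C *ᵥ y)) :=
      mul_nonneg (le_of_lt hε) (mul_nonneg (sq_nonneg t) (nsqR_nonneg _))
    linarith
  have hs0le : s0 ≤ 0 := by
    rcases le_or_gt b 0 with hb0 | hb0
    · have h := hmain (-1); nlinarith
    · by_contra hpos
      push_neg at hpos
      have h := hmain (-(s0/(2*b)))
      have hb0' : b ≠ 0 := ne_of_gt hb0
      have key : 2 * (-(s0/(2*b))) * s0 + 2 * (-(s0/(2*b)))^2 * b = -(s0^2/(2*b)) := by
        field_simp; ring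
      rw [key] at h
      have h2 : 0 < s0^2/(2*b) := div_pos (pow_pos hpos 2) (by linarith)
      linarith
  have : s0 = 0 := le_antisymm hs0le hs0nn
  exact nsqR_eq_zero.mp this

section blocks
variable {k r ι : Type*} [Fintype k] [Fintype r] [Fintype ι]
  [DecidableEq k] [DecidableEq r] [DecidableEq ι]

lemma nsqR_comp_equiv {κ : Type*} [Fintype κ] (e : κ ≃ ι) (g : κ → ℂ) :
    nsqR (g ∘ e.symm) = nsqR g := by
  simp only [nsqR, Function.comp]
  exact Fintype.sum_equiv e.symm _ _ (fun i => rfl)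

lemma nsqR_sum_elim_zero (h : r → ℂ) : nsqR (Sum.elim (0 : k → ℂ) h) = nsqR h := by
  simp [nsqR, Fintype.sum_sum_type]

lemma dp_comp_equiv {κ : Type*} [Fintype κ] (e : κ ≃ ι) (v : ι → ℂ) (g : κ → ℂ) :
    star v ⬝ᵥ (g ∘ e.symm) = star (v ∘ e) ⬝ᵥ g := by
  simp only [dotProduct, Pi.star_apply, Function.comp]
  exact Fintype.sum_equiv e.symm _ _ (fun i => by simp)

lemma dp_sum_elim (a : k ⊕ r → ℂ) (h : r → ℂ) :
    star a ⬝ᵥ Sum.elim (0 : k → ℂ) h = star (a ∘ Sum.inr) ⬝ᵥ h := by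
  simp [dotProduct, Fintype.sum_sum_type]

lemma reindex_block_mulVec (e : (k ⊕ r) ≃ ι) (Cs : Matrix r r ℂ) (w : ι → ℂ) :
    (Matrix.reindex e e (Matrix.fromBlocks 0 0 0 Cs)) *ᵥ w
      = (Sum.elim (0 : k → ℂ) (Cs *ᵥ (fun j => w (e (Sum.inr j))))) ∘ e.symm := by
  rw [reindex_apply, submatrix_mulVec_equiv, fromBlocks_mulVec]
  simp only [Equiv.symm_symm, zero_mulVec, zero_add, add_zero]
  rfl

lemma reindex_block_dp (e : (k ⊕ r) ≃ ι) (Cs : Matrix r r ℂ) (w : ι → ℂ) :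
    star w ⬝ᵥ (Matrix.reindex e e (Matrix.fromBlocks 0 0 0 Cs)) *ᵥ w
      = star (fun j => w (e (Sum.inr j))) ⬝ᵥ Cs *ᵥ (fun j => w (e (Sum.inr j))) := by
  rw [reindex_block_mulVec, dp_comp_equiv, dp_sum_elim]
  rfl

lemma nsqR_reindex_block (e : (k ⊕ r) ≃ ι) (Cs : Matrix r r ℂ) (w : ι → ℂ) :
    nsqR ((Matrix.reindex e e (Matrix.fromBlocks 0 0 0 Cs)) *ᵥ w)
      = nsqR (Cs *ᵥ (fun j => w (e (Sum.inr j)))) := by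
  rw [reindex_block_mulVec, nsqR_comp_equiv, nsqR_sum_elim_zero]

end blocks


lemma exists_eps {r : ℕ} (Cs : Matrix (Fin r) (Fin r) ℂ) (α : ℝ)
    (hrange : ∀ x : Fin r → ℂ, star x ⬝ᵥ x = 1 →
      0 < (Complex.exp (-(α:ℂ)*Complex.I) * (star x ⬝ᵥ Cs *ᵥ x)).re) :
    ∃ ε : ℝ, 0 < ε ∧ ∀ w : Fin r → ℂ,
      ε * nsqR (Cs *ᵥ w) ≤ 2 * (Complex.exp (-(α:ℂ)*Complex.I) * (star w ⬝ᵥ Cs *ᵥ w)).re := by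
  have h00 : nsqR (0 : Fin r → ℂ) = 0 := nsqR_eq_zero.mpr rfl
  have hzero : ∀ ε : ℝ, ∀ w : Fin r → ℂ, w = 0 →
      ε * nsqR (Cs *ᵥ w) ≤ 2 * (Complex.exp (-(α:ℂ)*Complex.I) * (star w ⬝ᵥ Cs *ᵥ w)).re := by
    intro ε w hw
    subst hw
    simp only [mulVec_zero, h00, star_zero, zero_dotProduct, mul_zero, Complex.zero_re]
    norm_num
  rcases Nat.eq_zero_or_pos r with hr | hr
  · refine ⟨1, one_pos, fun w => hzero 1 w ?_⟩
    subst hr; funext i; exact absurd i.2 (by omega)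
  set E := EuclideanSpace ℂ (Fin r)
  set q : (Fin r → ℂ) → ℝ := fun u =>
    (2 * (Complex.exp (-(α:ℂ)*Complex.I) * (star u ⬝ᵥ Cs *ᵥ u)).re) / (nsqR (Cs *ᵥ u) + 1)
    with hq
  have hdenpos : ∀ u : Fin r → ℂ, 0 < nsqR (Cs *ᵥ u) + 1 := by
    intro u; have := nsqR_nonneg (Cs *ᵥ u); linarith
  set f : E → ℝ := fun v => q ((WithLp.equiv 2 (Fin r → ℂ)) v) with hf
  have hcont : Continuous f := by
    have h1 : Continuous fun u : Fin r → ℂ => star u ⬝ᵥ Cs *ᵥ u := by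
      simp only [dotProduct, mulVec, Pi.star_apply]
      fun_prop
    have h2 : Continuous fun u : Fin r → ℂ => nsqR (Cs *ᵥ u) := by
      simp only [nsqR_def, mulVec, dotProduct]
      refine continuous_finset_sum _ (fun i _ => Complex.continuous_normSq.comp ?_)
      fun_prop
    have hq_cont : Continuous q := by
      apply Continuous.div
      · fun_prop
      · fun_prop
      · intro u; exact ne_of_gt (hdenpos u)
    exact hq_cont.comp (PiLp.continuous_ofLp 2 _)
  have hnorm : ∀ v : E, star ((WithLp.equiv 2 (Fin r → ℂ)) v) ⬝ᵥ ((WithLp.equiv 2 (Fin r → ℂ)) v)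
      = ((‖v‖^2 : ℝ) : ℂ) := by
    intro v
    rw [star_dp_self]
    norm_cast
    rw [EuclideanSpace.norm_eq, Real.sq_sqrt (by positivity), nsqR_def]
    congr 1
    funext i
    rw [Complex.normSq_eq_norm_sq]
    rfl
  -- sphere
  have hSne : (Metric.sphere (0:E) 1).Nonempty := by
    refine ⟨EuclideanSpace.single ⟨0, hr⟩ 1, ?_⟩
    rw [Metric.mem_sphere, dist_zero_right, EuclideanSpace.norm_single]
    norm_num
  obtain ⟨v0, hv0S, hmin⟩ :=
    (isCompact_sphere (0:E) 1).exists_isMinOn hSne hcont.continuousOn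
  have hSunit : ∀ v : E, v ∈ Metric.sphere (0:E) 1 →
      star ((WithLp.equiv 2 (Fin r → ℂ)) v) ⬝ᵥ ((WithLp.equiv 2 (Fin r → ℂ)) v) = 1 := by
    intro v hv
    rw [Metric.mem_sphere, dist_zero_right] at hv
    rw [hnorm, hv]; norm_num
  set δ := f v0 with hδ
  have hδpos : 0 < δ := by
    have hnum := hrange _ (hSunit v0 hv0S)
    have hden := hdenpos ((WithLp.equiv 2 (Fin r → ℂ)) v0)
    exact div_pos (by linarith) hden
  -- inequality on unit vectors
  have hunit : ∀ u : Fin r → ℂ, star u ⬝ᵥ u = 1 →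
      δ * nsqR (Cs *ᵥ u) ≤ 2 * (Complex.exp (-(α:ℂ)*Complex.I) * (star u ⬝ᵥ Cs *ᵥ u)).re := by
    intro u hu
    set v : E := (WithLp.equiv 2 (Fin r → ℂ)).symm u with hv
    have hveq : (WithLp.equiv 2 (Fin r → ℂ)) v = u := by
      rw [hv, Equiv.apply_symm_apply]
    have hvnorm : ‖v‖ = 1 := by
      have h1 : ((‖v‖^2 : ℝ) : ℂ) = 1 := by rw [← hnorm v, hveq, hu]
      have h2 : ‖v‖^2 = 1 := by exact_mod_cast h1
      have h3 : (‖v‖ - 1) * (‖v‖ + 1) = 0 := by ring_nf; linarith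
      rcases mul_eq_zero.mp h3 with h | h
      · linarith
      · have := norm_nonneg v; linarith
    have hvS : v ∈ Metric.sphere (0:E) 1 := by
      rw [Metric.mem_sphere, dist_zero_right]; exact hvnorm
    have h4 : δ ≤ f v := hmin hvS
    rw [hf] at h4
    simp only [hveq] at h4
    rw [hq] at h4
    have h5 : δ * (nsqR (Cs *ᵥ u) + 1)
        ≤ 2 * (Complex.exp (-(α:ℂ)*Complex.I) * (star u ⬝ᵥ Cs *ᵥ u)).re :=
      (le_div_iff₀ (hdenpos u)).mp h4
    have := nsqR_nonneg (Cs *ᵥ u)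
    nlinarith
  refine ⟨δ, hδpos, fun w => ?_⟩
  by_cases hw : w = 0
  · exact hzero δ w hw
  · set c : ℝ := Real.sqrt (nsqR w) with hc
    have hcpos : 0 < c := Real.sqrt_pos.mpr (nsqR_pos hw)
    have hc2 : c^2 = nsqR w := Real.sq_sqrt (nsqR_nonneg w)
    set u : Fin r → ℂ := ((c⁻¹ : ℝ) : ℂ) • w with hu
    have hu1 : star u ⬝ᵥ u = 1 := by
      rw [star_dp_self, hu, nsqR_smul, ← hc2]
      have : (c⁻¹)^2 * c^2 = 1 := by field_simp
      rw [this]; norm_num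
    have key := hunit u hu1
    have hCsu : Cs *ᵥ u = ((c⁻¹ : ℝ) : ℂ) • (Cs *ᵥ w) := by rw [hu, mulVec_smul]
    have hnsq : nsqR (Cs *ᵥ u) = (c⁻¹)^2 * nsqR (Cs *ᵥ w) := by rw [hCsu, nsqR_smul]
    have hdp2 : star u ⬝ᵥ Cs *ᵥ u = (((c⁻¹)^2 : ℝ) : ℂ) * (star w ⬝ᵥ Cs *ᵥ w) := by
      rw [hu, mulVec_smul, star_smul, smul_dotProduct, dotProduct_smul]
      simp only [smul_eq_mul, RCLike.star_def, Complex.conj_ofReal]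
      push_cast
      ring
    have hre2 : (Complex.exp (-(α:ℂ)*Complex.I) * (star u ⬝ᵥ Cs *ᵥ u)).re
        = (c⁻¹)^2 * (Complex.exp (-(α:ℂ)*Complex.I) * (star w ⬝ᵥ Cs *ᵥ w)).re := by
      rw [hdp2, show Complex.exp (-(α:ℂ)*Complex.I) * ((((c⁻¹)^2 : ℝ) : ℂ) * (star w ⬝ᵥ Cs *ᵥ w))
        = (((c⁻¹)^2 : ℝ) : ℂ) * (Complex.exp (-(α:ℂ)*Complex.I) * (star w ⬝ᵥ Cs *ᵥ w)) by ring,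
        Complex.re_ofReal_mul]
    rw [hnsq, hre2] at key
    have hinv2 : 0 < (c⁻¹)^2 := pow_pos (inv_pos.mpr hcpos) 2
    have key2 := mul_le_mul_of_nonneg_left key (le_of_lt (inv_pos.mpr hinv2))
    have ha : ((c⁻¹)^2)⁻¹ * ((c⁻¹)^2) = 1 := inv_mul_cancel₀ (ne_of_gt hinv2)
    calc δ * nsqR (Cs *ᵥ w)
        = (((c⁻¹)^2)⁻¹ * ((c⁻¹)^2)) * (δ * nsqR (Cs *ᵥ w)) := by rw [ha, one_mul]
      _ = ((c⁻¹)^2)⁻¹ * (δ * ((c⁻¹)^2 * nsqR (Cs *ᵥ w))) := by ring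
      _ ≤ ((c⁻¹)^2)⁻¹ * (2 * ((c⁻¹)^2 * (Complex.exp (-(α:ℂ)*Complex.I)
            * (star w ⬝ᵥ Cs *ᵥ w)).re)) := key2
      _ = (((c⁻¹)^2)⁻¹ * ((c⁻¹)^2)) * (2 * (Complex.exp (-(α:ℂ)*Complex.I)
            * (star w ⬝ᵥ Cs *ᵥ w)).re) := by ring
      _ = 2 * (Complex.exp (-(α:ℂ)*Complex.I) * (star w ⬝ᵥ Cs *ᵥ w)).re := by rw [ha, one_mul]


lemma conj_exp_pos (α : ℝ) :
    (starRingEnd ℂ) (Complex.exp ((α:ℂ)*Complex.I)) = Complex.exp (-(α:ℂ)*Complex.I) := by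
  rw [← Complex.exp_conj]; congr 1; simp

lemma herm_comb {ι : Type*} [Fintype ι] [DecidableEq ι] (C : Matrix ι ι ℂ) (α ε : ℝ) :
    (Complex.exp (-(α:ℂ)*Complex.I) • C + Complex.exp ((α:ℂ)*Complex.I) • Cᴴ
        - (ε:ℂ) • (Cᴴ*C)).IsHermitian := by
  show _ᴴ = _
  rw [conjTranspose_sub, conjTranspose_add, conjTranspose_smul, conjTranspose_smul,
    conjTranspose_smul, conjTranspose_conjTranspose, conjTranspose_mul,
    conjTranspose_conjTranspose]
  rw [show (star (Complex.exp (-(α:ℂ)*Complex.I)) : ℂ) = Complex.exp ((α:ℂ)*Complex.I)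
      from conj_exp_neg α,
    show (star (Complex.exp ((α:ℂ)*Complex.I)) : ℂ) = Complex.exp (-(α:ℂ)*Complex.I)
      from conj_exp_pos α,
    show (star ((ε:ℝ):ℂ) : ℂ) = ((ε:ℝ):ℂ) from Complex.conj_ofReal ε]
  abel

end QSproof

open QSproof

/-- `e^{-iα}C + e^{iα}Cᴴ ≥ ε CᴴC` for some `ε > 0` iff
`C = U diag(0, Cs) Uᴴ` with `U` unitary and `Cs` sectorial with numerical range in the
open half-plane `{z : Re(e^{-iα} z) > 0}`. -/
theorem quasi_sectorial_iff {n : ℕ} (C : Matrix (Fin n) (Fin n) ℂ) (α : ℝ) :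
    (∃ ε : ℝ, 0 < ε ∧
      (Complex.exp (-(α : ℂ) * Complex.I) • C + Complex.exp ((α : ℂ) * Complex.I) • Cᴴ
        - (ε : ℂ) • (Cᴴ * C)).PosSemidef) ↔
    (∃ (k r : ℕ) (e : (Fin k ⊕ Fin r) ≃ Fin n) (U : Matrix (Fin n) (Fin n) ℂ)
        (Cs : Matrix (Fin r) (Fin r) ℂ),
      Uᴴ * U = 1 ∧ U * Uᴴ = 1 ∧ Sectorial Cs ∧
      (∀ z ∈ numRange Cs, 0 < (Complex.exp (-(α : ℂ) * Complex.I) * z).re) ∧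
      C = U * (Matrix.reindex e e (Matrix.fromBlocks 0 0 0 Cs)) * Uᴴ) := by
  constructor
  · rintro ⟨ε, hε, hPSD⟩
    classical
    have hq : ∀ x : Fin n → ℂ, ε * nsqR (C *ᵥ x) ≤
        2 * (Complex.exp (-(α:ℂ)*Complex.I) * (star x ⬝ᵥ C *ᵥ x)).re := by
      intro x
      have h := hPSD.dotProduct_mulVec_nonneg x
      rw [key_form, Complex.zero_le_real] at h
      linarith
    have hApsd := posSemidef_conjTranspose_mul_self C
    set A := Cᴴ * C with hAdef
    have hA : A.IsHermitian := hApsd.1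
    set p : Fin n → Prop := fun i => hA.eigenvalues i = 0 with hp
    set k := Fintype.card {i // p i} with hk
    set r := Fintype.card {i // ¬ p i} with hrr
    set e : (Fin k ⊕ Fin r) ≃ Fin n :=
      (Equiv.sumCongr (Fintype.equivFin {i // p i}).symm
        (Fintype.equivFin {i // ¬ p i}).symm).trans (Equiv.sumCompl p) with he
    set V : Matrix (Fin n) (Fin n) ℂ := (hA.eigenvectorUnitary : Matrix (Fin n) (Fin n) ℂ) with hVdef
    have hV1 : Vᴴ * V = 1 := by
      rw [← star_eq_conjTranspose]
      exact mem_unitaryGroup_iff'.mp hA.eigenvectorUnitary.2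
    have hV2 : V * Vᴴ = 1 := by
      rw [← star_eq_conjTranspose]
      exact mem_unitaryGroup_iff.mp hA.eigenvectorUnitary.2
    have hdiag : Vᴴ * A * V = diagonal (RCLike.ofReal ∘ hA.eigenvalues) := by
      rw [← star_eq_conjTranspose]; have h := Matrix.IsHermitian.conjStarAlgAut_star_eigenvectorUnitary hA; rwa [Unitary.conjStarAlgAut_star_apply] at h
    have hpinl : ∀ i : Fin k, p (e (Sum.inl i)) := fun i => by
      simp only [he, Equiv.trans_apply, Equiv.sumCongr_apply, Sum.map_inl,
        Equiv.sumCompl_apply_inl]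
      exact ((Fintype.equivFin {i // p i}).symm i).2
    have hpinr : ∀ j : Fin r, ¬ p (e (Sum.inr j)) := fun j => by
      simp only [he, Equiv.trans_apply, Equiv.sumCongr_apply, Sum.map_inr,
        Equiv.sumCompl_apply_inr]
      exact ((Fintype.equivFin {i // ¬ p i}).symm j).2
    have hCu : ∀ q : Fin n, p q → C *ᵥ (fun i => V i q) = 0 := by
      intro q hq0
      have h1 : star (fun i => V i q) ⬝ᵥ A *ᵥ (fun i => V i q) = 0 := by
        rw [← conj_mul_apply, hdiag, diagonal_apply_eq]
        have : hA.eigenvalues q = 0 := hq0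
        simp [Function.comp, this]
      rw [hAdef, dp_conjTranspose_self] at h1
      exact nsqR_eq_zero.mp (by exact_mod_cast h1)
    have hCHu : ∀ q : Fin n, p q → Cᴴ *ᵥ (fun i => V i q) = 0 :=
      fun q h0 => ker_lemma hε hq (hCu q h0)
    set Cs : Matrix (Fin r) (Fin r) ℂ :=
      Matrix.of (fun i j : Fin r => (Vᴴ * C * V) (e (Sum.inr i)) (e (Sum.inr j))) with hCs
    have hVCV : Vᴴ * C * V = Matrix.reindex e e (Matrix.fromBlocks 0 0 0 Cs) := by
      ext p' q'
      obtain ⟨s, rfl⟩ : ∃ s, e s = p' := ⟨e.symm p', e.apply_symm_apply p'⟩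
      obtain ⟨t, rfl⟩ : ∃ t, e t = q' := ⟨e.symm q', e.apply_symm_apply q'⟩
      rw [reindex_apply, submatrix_apply, e.symm_apply_apply, e.symm_apply_apply]
      rcases t with j | j
      · -- column in kernel
        rw [conj_mul_apply, hCu (e (Sum.inl j)) (hpinl j), dotProduct_zero]
        rcases s with i | i
        · rw [fromBlocks_apply₁₁]; rfl
        · rw [fromBlocks_apply₂₁]; rfl
      · rcases s with i | i
        · rw [conj_mul_apply, dotProduct_mulVec]
          have h2 : star (fun i0 => V i0 (e (Sum.inl i))) ᵥ* C = 0 := by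
            have h3 := star_mulVec Cᴴ (fun i0 => V i0 (e (Sum.inl i)))
            rw [conjTranspose_conjTranspose, hCHu (e (Sum.inl i)) (hpinl i), star_zero] at h3
            exact h3.symm
          rw [h2, zero_dotProduct, fromBlocks_apply₁₂]; rfl
        · rw [fromBlocks_apply₂₂]; rfl
    have hCdecomp : C = V * (Matrix.reindex e e (Matrix.fromBlocks 0 0 0 Cs)) * Vᴴ := by
      rw [← hVCV]
      have h4 : V * (Vᴴ * C * V) * Vᴴ = (V * Vᴴ) * C * (V * Vᴴ) := by
        simp only [Matrix.mul_assoc]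
      rw [h4, hV2, Matrix.one_mul, Matrix.mul_one]
    have hpos : ∀ z ∈ numRange Cs, 0 < (Complex.exp (-(α:ℂ)*Complex.I) * z).re := by
      rintro z ⟨x, hx1, rfl⟩
      set xh : Fin n → ℂ := fun q0 => Sum.elim (0 : Fin k → ℂ) x (e.symm q0) with hxh
      have hxhr : (fun j => xh (e (Sum.inr j))) = x := by
        funext j; simp [hxh]
      set w : Fin n → ℂ := V *ᵥ xh with hwdef
      have hzw : star w ⬝ᵥ C *ᵥ w = star x ⬝ᵥ Cs *ᵥ x := by
        rw [hwdef, ← dp_conj_mul V C xh, hVCV, reindex_block_dp, hxhr]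
      have hCw : C *ᵥ w ≠ 0 := by
        intro h0
        have hAw : A *ᵥ w = 0 := by rw [hAdef, ← mulVec_mulVec, h0, mulVec_zero]
        have hDx : diagonal (RCLike.ofReal ∘ hA.eigenvalues) *ᵥ xh = 0 := by
          have h1 : (Vᴴ * A * V) *ᵥ xh = 0 := by
            rw [← mulVec_mulVec, ← mulVec_mulVec, ← hwdef, hAw, mulVec_zero]
          rwa [hdiag] at h1
        have hx0 : x = 0 := by
          funext j
          have h2 := congrFun hDx (e (Sum.inr j))
          rw [mulVec_diagonal] at h2
          simp only [Pi.zero_apply, Function.comp_apply] at h2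
          have h5 : xh (e (Sum.inr j)) = x j := congrFun hxhr j
          rw [h5] at h2
          have h7 : hA.eigenvalues (e (Sum.inr j)) ≠ 0 := hpinr j
          have h6 : ((hA.eigenvalues (e (Sum.inr j)) : ℝ) : ℂ) ≠ 0 := by
            exact_mod_cast h7
          exact (mul_eq_zero.mp h2).resolve_left h6
        rw [hx0] at hx1; simp at hx1
      have hq2 := hq w
      have hn : 0 < nsqR (C *ᵥ w) := nsqR_pos hCw
      rw [hzw] at hq2
      have : 0 < ε * nsqR (C *ᵥ w) := mul_pos hε hn
      linarith
    have hsec : Sectorial Cs := fun h0 => by simpa using hpos 0 h0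
    exact ⟨k, r, e, V, Cs, hV1, hV2, hsec, hpos, hCdecomp⟩
  · rintro ⟨k, r, e, U, Cs, hU1, hU2, hsec, hrange, hC⟩
    obtain ⟨ε, hε, hkey⟩ := exists_eps Cs α (fun x hx => hrange _ ⟨x, hx, rfl⟩)
    refine ⟨ε, hε, PosSemidef.of_dotProduct_mulVec_nonneg (herm_comb C α ε) fun x => ?_⟩
    rw [key_form, Complex.zero_le_real]
    set B : Matrix (Fin n) (Fin n) ℂ := Matrix.reindex e e (Matrix.fromBlocks 0 0 0 Cs) with hB
    set w : Fin n → ℂ := Uᴴ *ᵥ x with hw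
    have hBform : star x ⬝ᵥ C *ᵥ x
        = star (fun j => w (e (Sum.inr j))) ⬝ᵥ Cs *ᵥ (fun j => w (e (Sum.inr j))) := by
      rw [hC]
      have h1 := dp_conj_mul Uᴴ B x
      rw [conjTranspose_conjTranspose] at h1
      rw [h1, hB]
      exact reindex_block_dp e Cs w
    have hNorm : nsqR (C *ᵥ x) = nsqR (Cs *ᵥ (fun j => w (e (Sum.inr j)))) := by
      rw [hC]
      have h1 : (U * B * Uᴴ) *ᵥ x = U *ᵥ (B *ᵥ w) := by
        rw [hw, mulVec_mulVec, mulVec_mulVec]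
      rw [h1]
      have h2 : nsqR (U *ᵥ (B *ᵥ w)) = nsqR (B *ᵥ w) := by
        have h3 := dp_conj_mul U (1 : Matrix (Fin n) (Fin n) ℂ) (B *ᵥ w)
        rw [Matrix.mul_one, hU1, one_mulVec, one_mulVec, star_dp_self, star_dp_self] at h3
        exact_mod_cast h3.symm
      rw [h2, hB]
      exact nsqR_reindex_block e Cs w
    rw [hBform, hNorm]
    have := hkey (fun j => w (e (Sum.inr j)))
    linarith


end
end

section
/- Let C ∈ ℂ^{n×n} be semi-sectorial with rank r. Then the Moore–Penrose inverse C† is semi-sectorial and its phases satisfy φ_i(C†) = −φ_{r−i+1}(C) for i = 1, …, r. -/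
open Matrix Complex Real

noncomputable section

/-! ### Auxiliary lemmas -/

/-- Uniqueness of the Moore–Penrose inverse. -/
theorem aux_mp_unique {k l : Type*} [Fintype k] [Fintype l] (C : Matrix k l ℂ)
    (P Q : Matrix l k ℂ) (hP : IsMoorePenrose C P) (hQ : IsMoorePenrose C Q) : P = Q := by
  obtain ⟨hP1, hP2, hP3, hP4⟩ := hP
  obtain ⟨hQ1, hQ2, hQ3, hQ4⟩ := hQ
  have hCQ : C * Q = C * P := by
    calc C * Q = C * P * (C * Q) := by rw [← Matrix.mul_assoc, hP1]
    _ = (C * P)ᴴ * (C * Q)ᴴ := by rw [hP3, hQ3]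
    _ = ((C * Q) * (C * P))ᴴ := by rw [← Matrix.conjTranspose_mul]
    _ = (C * P)ᴴ := by rw [show (C * Q) * (C * P) = C * P by
          rw [← Matrix.mul_assoc, Matrix.mul_assoc C Q C, ← Matrix.mul_assoc C Q C, hQ1]]
    _ = C * P := hP3
  have hQC : Q * C = P * C := by
    calc Q * C = (Q * C) * (P * C) := by
          rw [Matrix.mul_assoc, ← Matrix.mul_assoc C P C, hP1]
    _ = (Q * C)ᴴ * (P * C)ᴴ := by rw [hQ4, hP4]
    _ = ((P * C) * (Q * C))ᴴ := by rw [← Matrix.conjTranspose_mul]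
    _ = (P * C)ᴴ := by rw [show (P * C) * (Q * C) = P * C by
          rw [Matrix.mul_assoc, ← Matrix.mul_assoc C Q C, hQ1]]
    _ = P * C := hP4
  symm
  calc Q = Q * C * Q := hQ2.symm
  _ = P * C * Q := by rw [hQC]
  _ = P * (C * Q) := by rw [Matrix.mul_assoc]
  _ = P * (C * P) := by rw [hCQ]
  _ = P * C * P := by rw [Matrix.mul_assoc]
  _ = P := hP2

theorem aux_semiSectorial_congr {ι : Type*} [Fintype ι] (M A : Matrix ι ι ℂ)
    (h : SemiSectorial M) : SemiSectorial (Aᴴ * M * A) := by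
  obtain ⟨θ, hθ⟩ := h
  refine ⟨θ, fun x => ?_⟩
  have key : star x ⬝ᵥ (Aᴴ * M * A).mulVec x = star (A.mulVec x) ⬝ᵥ M.mulVec (A.mulVec x) := by
    rw [← Matrix.mulVec_mulVec, ← Matrix.mulVec_mulVec, Matrix.dotProduct_mulVec,
      ← Matrix.star_mulVec]
  rw [key]; exact hθ _

theorem aux_semiSectorial_reindex {ι κ : Type*} [Fintype ι] [Fintype κ] (e : κ ≃ ι)
    (M : Matrix κ κ ℂ) (h : SemiSectorial M) : SemiSectorial (Matrix.reindex e e M) := by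
  obtain ⟨θ, hθ⟩ := h
  refine ⟨θ, fun x => ?_⟩
  have key : star x ⬝ᵥ (Matrix.reindex e e M).mulVec x
      = star (x ∘ e) ⬝ᵥ M.mulVec (x ∘ e) := by
    rw [Matrix.reindex_apply, Matrix.submatrix_mulVec_equiv]
    simp only [Equiv.symm_symm]
    refine Fintype.sum_equiv e.symm _ _ fun a => by simp [Function.comp]
  rw [key]; exact hθ _

theorem aux_re_exp_mul_real (s r : ℝ) :
    (Complex.exp ((s : ℂ) * Complex.I) * (r : ℂ)).re = Real.cos s * r := by
  rw [Complex.mul_re]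
  simp [Complex.exp_ofReal_mul_I_re, Complex.exp_ofReal_mul_I_im]

theorem aux_semiSectorial_gsd (n0 m p : ℕ) (θ : Fin m → ℝ) (θ0 : ℝ)
    (hb : ∀ i, θ0 - π/2 ≤ θ i ∧ θ i ≤ θ0 + π/2) :
    SemiSectorial (gsdMat n0 m p θ θ0) := by
  refine ⟨θ0, fun x => ?_⟩
  have hx : star x ⬝ᵥ (gsdMat n0 m p θ θ0).mulVec x
      = (∑ i : Fin m, Complex.exp ((θ i : ℂ) * Complex.I) *
          ((starRingEnd ℂ) (x (Sum.inl (Sum.inr i))) * x (Sum.inl (Sum.inr i))))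
        + Complex.exp ((θ0 : ℂ) * Complex.I) * ∑ k : Fin p,
            ((starRingEnd ℂ) (x (Sum.inr (0, k))) * x (Sum.inr (0, k))
              + (starRingEnd ℂ) (x (Sum.inr (1, k))) * x (Sum.inr (1, k))
              + 2 * ((starRingEnd ℂ) (x (Sum.inr (0, k))) * x (Sum.inr (1, k)))) := by
    simp only [dotProduct, Matrix.mulVec, gsdMat, Fintype.sum_sum_type,
      Fintype.sum_prod_type, Fin.sum_univ_two, Matrix.fromBlocks_apply₁₁,
      Matrix.fromBlocks_apply₁₂, Matrix.fromBlocks_apply₂₁, Matrix.fromBlocks_apply₂₂,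
      Matrix.blockDiagonal_apply, Matrix.diagonal_apply, Matrix.zero_apply,
      Pi.star_apply, RCLike.star_def]
    simp only [zero_mul, Finset.sum_const_zero, add_zero, zero_add, Matrix.smul_apply,
      Matrix.cons_val_zero, Matrix.cons_val_one, Matrix.head_cons, Matrix.cons_val',
      Matrix.empty_val', Matrix.cons_val_fin_one, smul_eq_mul, mul_one, mul_zero,
      ite_mul, zero_mul, Finset.sum_ite_eq, Finset.mem_univ, if_true, mul_zero,
      Finset.sum_const_zero, add_zero, zero_add]
    rw [Finset.mul_sum, ← Finset.sum_add_distrib]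
    congr 1
    · exact Finset.sum_congr rfl fun i _ => by ring
    · exact Finset.sum_congr rfl fun k _ => by norm_num; ring
  rw [hx, mul_add, ← mul_assoc, show Complex.exp (-(θ0:ℂ) * Complex.I) *
      Complex.exp ((θ0:ℂ) * Complex.I) = 1 by
        rw [← Complex.exp_add, show -(θ0:ℂ) * Complex.I + (θ0:ℂ) * Complex.I = 0 by ring,
          Complex.exp_zero],
    one_mul, Complex.add_re]
  apply add_nonneg
  · rw [Finset.mul_sum, Complex.re_sum]
    apply Finset.sum_nonneg
    intro i _
    rw [← mul_assoc, ← Complex.exp_add,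
      show -(θ0:ℂ) * Complex.I + (θ i : ℂ) * Complex.I = ((θ i - θ0 : ℝ) : ℂ) * Complex.I by
        push_cast; ring,
      ← Complex.normSq_eq_conj_mul_self, aux_re_exp_mul_real]
    refine mul_nonneg (Real.cos_nonneg_of_mem_Icc ⟨?_, ?_⟩) (Complex.normSq_nonneg _)
    · have := (hb i).1; linarith
    · have := (hb i).2; linarith
  · rw [Complex.re_sum]
    apply Finset.sum_nonneg
    intro k _
    set a := x (Sum.inr (0, k)); set b := x (Sum.inr (1, k))
    have h1 : ((starRingEnd ℂ) a * a).re = Complex.normSq a := by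
      rw [← Complex.normSq_eq_conj_mul_self]; simp
    have h2 : ((starRingEnd ℂ) b * b).re = Complex.normSq b := by
      rw [← Complex.normSq_eq_conj_mul_self]; simp
    have h3 : -(‖a‖ * ‖b‖) ≤ ((starRingEnd ℂ) a * b).re := by
      have := (abs_le.mp (Complex.abs_re_le_norm ((starRingEnd ℂ) a * b))).1
      rw [norm_mul, Complex.norm_conj] at this
      linarith
    have h4 := Complex.sq_norm a
    have h5 := Complex.sq_norm b
    have h6 := sq_nonneg (‖a‖ - ‖b‖)
    rw [Complex.add_re, Complex.add_re, h1, h2]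
    have h7 : (2 * ((starRingEnd ℂ) a * b)).re = 2 * ((starRingEnd ℂ) a * b).re := by
      rw [Complex.mul_re]; norm_num
    rw [h7]
    nlinarith

theorem aux_gsd_eq (n0 m p : ℕ) (θ : Fin m → ℝ) (θ0 : ℝ) :
    gsdMat n0 m p θ θ0 =
      Matrix.reindex (Equiv.sumAssoc (Fin n0) (Fin m) (Fin 2 × Fin p)).symm
        (Equiv.sumAssoc (Fin n0) (Fin m) (Fin 2 × Fin p)).symm
        (Matrix.fromBlocks 0 0 0
          (Matrix.fromBlocks (Matrix.diagonal fun i => Complex.exp ((θ i : ℂ) * Complex.I)) 0 0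
            (Matrix.blockDiagonal fun _ : Fin p => Complex.exp ((θ0 : ℂ) * Complex.I) •
              (!![1, 2; 0, 1] : Matrix (Fin 2) (Fin 2) ℂ)))) := by
  ext i j
  rcases i with (i | i) | i <;> rcases j with (j | j) | j <;>
    simp [gsdMat, Equiv.sumAssoc]

theorem aux_two_a (c c' : ℂ) (h : c * c' = 1) :
    (c • (!![1,2;0,1] : Matrix (Fin 2) (Fin 2) ℂ)) *
      ((!![1,0;0,-1] : Matrix (Fin 2) (Fin 2) ℂ)ᴴ * (c' • !![1,2;0,1]) * !![1,0;0,-1]) = 1 := by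
  ext i j
  fin_cases i <;> fin_cases j <;>
    simp [Matrix.mul_apply, Fin.sum_univ_two, Matrix.one_apply] <;>
      first | linear_combination h | ring

theorem aux_two_b (c c' : ℂ) (h : c * c' = 1) :
    ((!![1,0;0,-1] : Matrix (Fin 2) (Fin 2) ℂ)ᴴ * (c' • !![1,2;0,1]) * !![1,0;0,-1]) *
      (c • (!![1,2;0,1] : Matrix (Fin 2) (Fin 2) ℂ)) = 1 := by
  ext i j
  fin_cases i <;> fin_cases j <;>
    simp [Matrix.mul_apply, Fin.sum_univ_two, Matrix.one_apply] <;>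
      first | linear_combination h | ring

open scoped ComplexOrder in
theorem aux_core {n : ℕ} {κ0 ρ : Type*} [Fintype κ0] [Fintype ρ] [DecidableEq κ0] [DecidableEq ρ]
    (eK : (κ0 ⊕ ρ) ≃ Fin n) (T : Matrix (Fin n) (Fin n) ℂ) (hT : IsUnit T.det)
    (M1 N1 K : Matrix ρ ρ ℂ) (hK : IsUnit K.det)
    (hMW : M1 * (Kᴴ * N1 * K) = 1) (hWM : (Kᴴ * N1 * K) * M1 = 1) :
    ∃ S : Matrix (Fin n) (Fin n) ℂ, IsUnit S.det ∧
      IsMoorePenrose (Tᴴ * (Matrix.reindex eK eK (Matrix.fromBlocks 0 0 0 M1)) * T)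
        (Sᴴ * (Matrix.reindex eK eK (Matrix.fromBlocks 0 0 0 N1)) * S) := by
  classical
  have hTd : T.det ≠ 0 := hT.ne_zero
  have sand : ∀ (A : Matrix (Fin n) (Fin n) ℂ) (X : Matrix (κ0 ⊕ ρ) (κ0 ⊕ ρ) ℂ),
      Aᴴ * (Matrix.reindex eK eK X) * A = (A.submatrix eK id)ᴴ * X * (A.submatrix eK id) := by
    intro A X
    conv_rhs => rw [show X = ((Matrix.reindex eK eK X).submatrix eK eK : Matrix _ _ ℂ) from by simp]
    rw [Matrix.conjTranspose_submatrix]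
    simp only [Matrix.submatrix_mul_equiv, Matrix.submatrix_id_id]
  set B : Matrix ρ (κ0 ⊕ ρ) ℂ := Matrix.fromCols 0 1 with hBdef
  set T' : Matrix (κ0 ⊕ ρ) (Fin n) ℂ := T.submatrix eK id with hT'def
  set T2 : Matrix ρ (Fin n) ℂ := B * T' with hT2def
  have blocksand : ∀ Q : Matrix ρ ρ ℂ,
      T'ᴴ * (Matrix.fromBlocks 0 0 0 Q : Matrix (κ0 ⊕ ρ) (κ0 ⊕ ρ) ℂ) * T' = T2ᴴ * Q * T2 := by
    intro Q
    have hB : (Matrix.fromBlocks 0 0 0 Q : Matrix (κ0 ⊕ ρ) (κ0 ⊕ ρ) ℂ) = Bᴴ * Q * B := by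
      rw [hBdef, Matrix.conjTranspose_fromCols_eq_fromRows_conjTranspose,
        Matrix.conjTranspose_zero, Matrix.conjTranspose_one, Matrix.fromRows_mul,
        Matrix.fromRows_mul_fromCols]
      simp
    rw [hB, hT2def]
    simp only [Matrix.conjTranspose_mul, Matrix.mul_assoc]
  set G : Matrix ρ ρ ℂ := T2 * T2ᴴ with hGdef
  have hGH : Gᴴ = G := by rw [hGdef, Matrix.conjTranspose_mul, Matrix.conjTranspose_conjTranspose]
  have hGdetne : G.det ≠ 0 := by
    intro h0
    obtain ⟨v, hv, hGv⟩ := Matrix.exists_mulVec_eq_zero_iff.mpr h0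
    have h1 : star v ⬝ᵥ G.mulVec v = star (T2ᴴ.mulVec v) ⬝ᵥ (T2ᴴ.mulVec v) := by
      rw [hGdef, ← Matrix.mulVec_mulVec, Matrix.dotProduct_mulVec,
        show star v ᵥ* T2 = star (T2ᴴ.mulVec v) by
          rw [Matrix.star_mulVec, Matrix.conjTranspose_conjTranspose]]
    have h2 : T2ᴴ.mulVec v = 0 := by
      rw [hGv] at h1
      simp only [dotProduct_zero] at h1
      exact dotProduct_star_self_eq_zero.mp h1.symm
    have h3 : Tᴴ.mulVec ((Bᴴ.mulVec v) ∘ eK.symm) = 0 := by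
      have : T2ᴴ.mulVec v = Tᴴ.mulVec ((Bᴴ.mulVec v) ∘ eK.symm) := by
        rw [hT2def, Matrix.conjTranspose_mul, ← Matrix.mulVec_mulVec, hT'def,
          Matrix.conjTranspose_submatrix, Matrix.submatrix_mulVec_equiv]
        rfl
      rw [← this, h2]
    have hTHd : Tᴴ.det ≠ 0 := by
      rw [Matrix.det_conjTranspose]
      simpa using hTd
    have h4 : (Bᴴ.mulVec v) ∘ eK.symm = 0 := by
      by_contra hw
      exact hTHd (Matrix.exists_mulVec_eq_zero_iff.mp ⟨_, hw, h3⟩)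
    have h5 : v = 0 := by
      funext i
      have := congrFun h4 (eK (Sum.inr i))
      simp only [Function.comp_apply, Equiv.symm_apply_apply, Pi.zero_apply] at this
      rw [hBdef, Matrix.conjTranspose_fromCols_eq_fromRows_conjTranspose,
        Matrix.conjTranspose_zero, Matrix.conjTranspose_one, Matrix.fromRows_mulVec] at this
      simpa using this
    exact hv h5
  have hGdet : IsUnit G.det := isUnit_iff_ne_zero.mpr hGdetne
  have hGGi : G * G⁻¹ = 1 := Matrix.mul_nonsing_inv G hGdet
  have hGiG : G⁻¹ * G = 1 := Matrix.nonsing_inv_mul G hGdet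
  have hGiH : (G⁻¹)ᴴ = G⁻¹ := by rw [Matrix.conjTranspose_nonsing_inv, hGH]
  set W : Matrix ρ ρ ℂ := Kᴴ * N1 * K with hWdef
  set Z : Matrix ρ (Fin n) ℂ := K * G⁻¹ * T2 with hZdef
  set P0 : Matrix (Fin n) (Fin n) ℂ := Zᴴ * N1 * Z with hP0def
  set C' : Matrix (Fin n) (Fin n) ℂ := T2ᴴ * M1 * T2 with hC'def
  have hP0 : P0 = T2ᴴ * (G⁻¹ * W * G⁻¹) * T2 := by
    rw [hP0def, hZdef, hWdef]
    simp only [Matrix.conjTranspose_mul, hGiH, Matrix.mul_assoc]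
  have hTT : T2 * T2ᴴ = G := hGdef.symm
  have hCP : C' * P0 = T2ᴴ * G⁻¹ * T2 := by
    rw [hP0, hC'def]
    calc (T2ᴴ * M1 * T2) * (T2ᴴ * (G⁻¹ * W * G⁻¹) * T2)
        = T2ᴴ * M1 * (T2 * T2ᴴ) * (G⁻¹ * W * G⁻¹) * T2 := by simp only [Matrix.mul_assoc]
      _ = T2ᴴ * M1 * G * (G⁻¹ * W * G⁻¹) * T2 := by rw [hTT]
      _ = T2ᴴ * (M1 * ((G * G⁻¹) * (W * (G⁻¹ * T2)))) := by simp only [Matrix.mul_assoc]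
      _ = T2ᴴ * ((M1 * W) * (G⁻¹ * T2)) := by
          rw [hGGi, Matrix.one_mul]; simp only [Matrix.mul_assoc]
      _ = T2ᴴ * (G⁻¹ * T2) := by rw [hMW, Matrix.one_mul]
      _ = T2ᴴ * G⁻¹ * T2 := by simp only [Matrix.mul_assoc]
  have hPC : P0 * C' = T2ᴴ * G⁻¹ * T2 := by
    rw [hP0, hC'def]
    calc (T2ᴴ * (G⁻¹ * W * G⁻¹) * T2) * (T2ᴴ * M1 * T2)
        = T2ᴴ * (G⁻¹ * W * G⁻¹) * (T2 * T2ᴴ) * M1 * T2 := by simp only [Matrix.mul_assoc]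
      _ = T2ᴴ * (G⁻¹ * W * G⁻¹) * G * M1 * T2 := by rw [hTT]
      _ = T2ᴴ * (G⁻¹ * (W * ((G⁻¹ * G) * (M1 * T2)))) := by simp only [Matrix.mul_assoc]
      _ = T2ᴴ * (G⁻¹ * ((W * M1) * T2)) := by
          rw [hGiG, Matrix.one_mul]; simp only [Matrix.mul_assoc]
      _ = T2ᴴ * (G⁻¹ * T2) := by rw [hWM, Matrix.one_mul]
      _ = T2ᴴ * G⁻¹ * T2 := by simp only [Matrix.mul_assoc]
  have hHerm : (T2ᴴ * G⁻¹ * T2)ᴴ = T2ᴴ * G⁻¹ * T2 := by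
    simp only [Matrix.conjTranspose_mul, Matrix.conjTranspose_conjTranspose, hGiH,
      Matrix.mul_assoc]
  have ax1 : C' * P0 * C' = C' := by
    rw [hCP, hC'def]
    calc (T2ᴴ * G⁻¹ * T2) * (T2ᴴ * M1 * T2)
        = T2ᴴ * (G⁻¹ * ((T2 * T2ᴴ) * (M1 * T2))) := by simp only [Matrix.mul_assoc]
      _ = T2ᴴ * ((G⁻¹ * G) * (M1 * T2)) := by rw [hTT, ← Matrix.mul_assoc G⁻¹ G]
      _ = T2ᴴ * (M1 * T2) := by rw [hGiG, Matrix.one_mul]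
      _ = T2ᴴ * M1 * T2 := by simp only [Matrix.mul_assoc]
  have ax2 : P0 * C' * P0 = P0 := by
    rw [hPC, hP0]
    calc (T2ᴴ * G⁻¹ * T2) * (T2ᴴ * (G⁻¹ * W * G⁻¹) * T2)
        = T2ᴴ * (G⁻¹ * ((T2 * T2ᴴ) * ((G⁻¹ * W * G⁻¹) * T2))) := by
          simp only [Matrix.mul_assoc]
      _ = T2ᴴ * ((G⁻¹ * G) * ((G⁻¹ * W * G⁻¹) * T2)) := by
          rw [hTT, ← Matrix.mul_assoc G⁻¹ G]
      _ = T2ᴴ * ((G⁻¹ * W * G⁻¹) * T2) := by rw [hGiG, Matrix.one_mul]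
      _ = T2ᴴ * (G⁻¹ * W * G⁻¹) * T2 := by simp only [Matrix.mul_assoc]
  have ax3 : (C' * P0)ᴴ = C' * P0 := by rw [hCP]; exact hHerm
  have ax4 : (P0 * C')ᴴ = P0 * C' := by rw [hPC]; exact hHerm
  set F : Matrix (κ0 ⊕ ρ) (κ0 ⊕ ρ) ℂ := Matrix.fromBlocks 1 0 0 (K * G⁻¹) with hFdef
  set S : Matrix (Fin n) (Fin n) ℂ := (Matrix.reindex eK eK F) * T with hSdef
  have hSdet : IsUnit S.det := by
    rw [hSdef, Matrix.det_mul, Matrix.det_reindex_self, hFdef,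
      Matrix.det_fromBlocks_zero₂₁, Matrix.det_one, one_mul, Matrix.det_mul]
    refine ((hK.mul ?_).mul hT)
    rw [Matrix.det_nonsing_inv]
    exact isUnit_iff_ne_zero.mpr (by simp [Ring.inverse_eq_inv', hGdetne])
  have hStt : S.submatrix eK id = F * T' := by
    rw [hSdef, hT'def]
    ext i j
    simp only [Matrix.submatrix_apply, id_eq, Matrix.mul_apply, Matrix.reindex_apply]
    exact Fintype.sum_equiv eK.symm _ _ fun x => by simp
  have hS : Sᴴ * (Matrix.reindex eK eK (Matrix.fromBlocks 0 0 0 N1)) * S = P0 := by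
    rw [sand S, hStt]
    have hFN : Fᴴ * (Matrix.fromBlocks 0 0 0 N1) * F
        = Matrix.fromBlocks 0 0 0 ((K * G⁻¹)ᴴ * N1 * (K * G⁻¹)) := by
      rw [hFdef, Matrix.fromBlocks_conjTranspose, Matrix.fromBlocks_multiply,
        Matrix.fromBlocks_multiply]
      simp
    have : (F * T')ᴴ * (Matrix.fromBlocks 0 0 0 N1 : Matrix (κ0 ⊕ ρ) (κ0 ⊕ ρ) ℂ) * (F * T')
        = T'ᴴ * (Fᴴ * (Matrix.fromBlocks 0 0 0 N1) * F) * T' := by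
      simp only [Matrix.conjTranspose_mul, Matrix.mul_assoc]
    rw [this, hFN, blocksand, hP0def, hZdef]
    simp only [Matrix.conjTranspose_mul, hGiH, Matrix.mul_assoc]
  refine ⟨S, hSdet, ?_⟩
  have hCeq : Tᴴ * (Matrix.reindex eK eK (Matrix.fromBlocks 0 0 0 M1)) * T = C' := by
    rw [sand T, ← hT'def, blocksand, hC'def]
  rw [hCeq, hS]
  exact ⟨ax1, ax2, ax3, ax4⟩

/-- the Moore–Penrose inverse of a semi-sectorial matrix of rank `r` is
semi-sectorial with phases `φ_i(C†) = -φ_{r-i+1}(C)`. -/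
theorem phases_of_pinv {n r : ℕ} (C : Matrix (Fin n) (Fin n) ℂ) (hC : SemiSectorial C)
    (hr : C.rank = r) (P : Matrix (Fin n) (Fin n) ℂ) (hP : IsMoorePenrose C P)
    (φ : Fin r → ℝ) (hφ : HasPhases C φ) :
    SemiSectorial P ∧ HasPhases P (fun i => - φ i.rev) := by
  classical
  obtain ⟨hA, n0, m, p, θ, θ0, e, T, hT, hb, hdec, hmul⟩ := hφ
  set σ := (Equiv.sumAssoc (Fin n0) (Fin m) (Fin 2 × Fin p)).symm with hσ
  set eK := σ.trans e with heK
  have reire : ∀ X : Matrix (Fin n0 ⊕ (Fin m ⊕ Fin 2 × Fin p))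
      (Fin n0 ⊕ (Fin m ⊕ Fin 2 × Fin p)) ℂ,
      Matrix.reindex e e (Matrix.reindex σ σ X) = Matrix.reindex eK eK X := by
    intro X
    ext i j
    simp [Matrix.reindex_apply, Matrix.submatrix_apply, heK]
  set J2 : Matrix (Fin 2) (Fin 2) ℂ := !![1,2;0,1] with hJ2
  set Jd : Matrix (Fin 2) (Fin 2) ℂ := !![1,0;0,-1] with hJd
  set θ' : Fin m → ℝ := fun i => -θ i with hθ'
  set M1 : Matrix (Fin m ⊕ Fin 2 × Fin p) (Fin m ⊕ Fin 2 × Fin p) ℂ :=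
    Matrix.fromBlocks (Matrix.diagonal fun i => Complex.exp ((θ i : ℂ) * Complex.I)) 0 0
      (Matrix.blockDiagonal fun _ : Fin p => Complex.exp ((θ0 : ℂ) * Complex.I) • J2) with hM1
  set N1 : Matrix (Fin m ⊕ Fin 2 × Fin p) (Fin m ⊕ Fin 2 × Fin p) ℂ :=
    Matrix.fromBlocks (Matrix.diagonal fun i => Complex.exp ((θ' i : ℂ) * Complex.I)) 0 0
      (Matrix.blockDiagonal fun _ : Fin p => Complex.exp (((-θ0 : ℝ) : ℂ) * Complex.I) • J2)
    with hN1
  set K : Matrix (Fin m ⊕ Fin 2 × Fin p) (Fin m ⊕ Fin 2 × Fin p) ℂ :=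
    Matrix.fromBlocks 1 0 0 (Matrix.blockDiagonal fun _ : Fin p => Jd) with hKdef
  have hKdet : IsUnit K.det := by
    rw [hKdef, Matrix.det_fromBlocks_zero₂₁, Matrix.det_one, one_mul,
      Matrix.det_blockDiagonal]
    refine isUnit_iff_ne_zero.mpr ?_
    rw [show Jd.det = -1 by rw [hJd, Matrix.det_fin_two_of]; ring]
    simp
  have hcc : Complex.exp ((θ0 : ℂ) * Complex.I) * Complex.exp (((-θ0 : ℝ) : ℂ) * Complex.I)
      = 1 := by
    rw [← Complex.exp_add]
    push_cast
    ring_nf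
    exact Complex.exp_zero
  have hDD : (Matrix.diagonal fun i => Complex.exp ((θ i : ℂ) * Complex.I)) *
      (Matrix.diagonal fun i => Complex.exp ((θ' i : ℂ) * Complex.I)) = 1 := by
    rw [Matrix.diagonal_mul_diagonal,
      show (fun i => Complex.exp ((θ i : ℂ) * Complex.I) *
          Complex.exp ((θ' i : ℂ) * Complex.I)) = fun _ => (1 : ℂ) from funext fun i => by
        rw [← Complex.exp_add, hθ']
        push_cast
        ring_nf
        exact Complex.exp_zero,
      Matrix.diagonal_one]
  have hDD' : (Matrix.diagonal fun i => Complex.exp ((θ' i : ℂ) * Complex.I)) *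
      (Matrix.diagonal fun i => Complex.exp ((θ i : ℂ) * Complex.I)) = 1 := by
    rw [Matrix.diagonal_mul_diagonal,
      show (fun i => Complex.exp ((θ' i : ℂ) * Complex.I) *
          Complex.exp ((θ i : ℂ) * Complex.I)) = fun _ => (1 : ℂ) from funext fun i => by
        rw [← Complex.exp_add, hθ']
        push_cast
        ring_nf
        exact Complex.exp_zero,
      Matrix.diagonal_one]
  have hMW : M1 * (Kᴴ * N1 * K) = 1 := by
    rw [hM1, hN1, hKdef]
    simp only [Matrix.fromBlocks_conjTranspose, Matrix.conjTranspose_zero,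
      Matrix.conjTranspose_one, Matrix.blockDiagonal_conjTranspose,
      Matrix.fromBlocks_multiply, Matrix.mul_zero, Matrix.zero_mul, add_zero, zero_add,
      Matrix.mul_one, Matrix.one_mul, ← Matrix.blockDiagonal_mul]
    rw [hDD]
    rw [show (fun k : Fin p => (Complex.exp ((θ0 : ℂ) * Complex.I) • J2) *
        (Jdᴴ * (Complex.exp (((-θ0 : ℝ) : ℂ) * Complex.I) • J2) * Jd))
        = fun _ => (1 : Matrix (Fin 2) (Fin 2) ℂ) from funext fun _ => by
          rw [hJ2, hJd]; exact aux_two_a _ _ hcc]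
    rw [show (fun _ : Fin p => (1 : Matrix (Fin 2) (Fin 2) ℂ)) = 1 from rfl,
      Matrix.blockDiagonal_one]
    exact Matrix.fromBlocks_one
  have hWM : (Kᴴ * N1 * K) * M1 = 1 := by
    rw [hM1, hN1, hKdef]
    simp only [Matrix.fromBlocks_conjTranspose, Matrix.conjTranspose_zero,
      Matrix.conjTranspose_one, Matrix.blockDiagonal_conjTranspose,
      Matrix.fromBlocks_multiply, Matrix.mul_zero, Matrix.zero_mul, add_zero, zero_add,
      Matrix.mul_one, Matrix.one_mul, ← Matrix.blockDiagonal_mul]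
    rw [hDD']
    rw [show (fun k : Fin p => (Jdᴴ * (Complex.exp (((-θ0 : ℝ) : ℂ) * Complex.I) • J2) * Jd) *
        (Complex.exp ((θ0 : ℂ) * Complex.I) • J2))
        = fun _ => (1 : Matrix (Fin 2) (Fin 2) ℂ) from funext fun _ => by
          rw [hJ2, hJd]; exact aux_two_b _ _ hcc]
    rw [show (fun _ : Fin p => (1 : Matrix (Fin 2) (Fin 2) ℂ)) = 1 from rfl,
      Matrix.blockDiagonal_one]
    exact Matrix.fromBlocks_one
  have hdec' : C = Tᴴ * (Matrix.reindex eK eK (Matrix.fromBlocks 0 0 0 M1)) * T := by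
    rw [hdec, aux_gsd_eq, ← hσ, reire, hM1, hJ2]
  obtain ⟨S, hSdet, hMP⟩ := aux_core eK T hT M1 N1 K hKdet hMW hWM
  rw [← hdec'] at hMP
  have hPeq : P = Sᴴ * (Matrix.reindex eK eK (Matrix.fromBlocks 0 0 0 N1)) * S :=
    aux_mp_unique C P _ hP hMP
  have hgsd2 : Matrix.reindex e e (gsdMat n0 m p θ' (-θ0))
      = Matrix.reindex eK eK (Matrix.fromBlocks 0 0 0 N1) := by
    rw [aux_gsd_eq, ← hσ, reire, hN1, hJ2]
  have hPdec : P = Sᴴ * (Matrix.reindex e e (gsdMat n0 m p θ' (-θ0))) * S := by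
    rw [hPeq, hgsd2]
  have hb' : ∀ i, -θ0 - π/2 ≤ θ' i ∧ θ' i ≤ -θ0 + π/2 := by
    intro i
    rw [hθ']
    constructor
    · have := (hb i).2; simp only; linarith
    · have := (hb i).1; simp only; linarith
  have hsemi : SemiSectorial P := by
    rw [hPdec]
    exact aux_semiSectorial_congr _ S
      (aux_semiSectorial_reindex e _ (aux_semiSectorial_gsd n0 m p θ' (-θ0) hb'))
  refine ⟨hsemi, ?_, n0, m, p, θ', -θ0, e, S, hSdet, hb', hPdec, ?_⟩
  · intro i j hij
    exact neg_le_neg (hA (Fin.rev_le_rev.mpr hij))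
  · have hrev : (Finset.univ : Finset (Fin r)).val
        = Multiset.map Fin.rev (Finset.univ : Finset (Fin r)).val := by
      conv_lhs => rw [← Finset.map_univ_equiv (Fin.revPerm (n := r))]
      rfl
    have h1 : Multiset.map (fun i : Fin r => -φ i.rev) Finset.univ.val
        = Multiset.map (fun t => -t) (Multiset.map φ Finset.univ.val) := by
      rw [Multiset.map_map]
      conv_rhs => rw [hrev]
      rw [Multiset.map_map]
      exact Multiset.map_congr rfl fun i _ => by simp
    rw [h1, hmul]
    simp only [Multiset.map_add, Multiset.map_replicate, Multiset.map_map]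
    rw [show ((fun t : ℝ => -t) ∘ θ) = θ' from rfl,
      show -(θ0 + π/2) = -θ0 - π/2 by ring, show -(θ0 - π/2) = -θ0 + π/2 by ring,
      add_right_comm]

end
end

section
/- For a quasi-sectorial matrix A and semi-sectorial matrix B, every nonzero eigenvalue λ of AB satisfies φ̲(A) + φ̲(B) ≤ arg λ ≤ φ̄(A) + φ̄(B) (for a suitable branch of the argument). -/
open Matrix Complex Real

noncomputable section

-- ========================= auxiliary lemmas =========================

section Aux

def InCone (l h : ℝ) (z : ℂ) : Prop :=
  0 ≤ (Complex.exp (-(l:ℂ)*Complex.I) * z).im ∧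
  (Complex.exp (-(h:ℂ)*Complex.I) * z).im ≤ 0 ∧
  0 ≤ (Complex.exp (-(((l+h)/2 : ℝ):ℂ)*Complex.I) * z).re

lemma InCone.zero (l h : ℝ) : InCone l h 0 := by simp [InCone]

lemma InCone.add {l h : ℝ} {z w : ℂ} (hz : InCone l h z) (hw : InCone l h w) :
    InCone l h (z + w) := by
  obtain ⟨a1,a2,a3⟩ := hz; obtain ⟨b1,b2,b3⟩ := hw
  refine ⟨?_, ?_, ?_⟩ <;> simp only [mul_add, Complex.add_im, Complex.add_re] <;> linarith

lemma InCone.sum {α : Type*} {l h : ℝ} {s : Finset α} {f : α → ℂ}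
    (hf : ∀ a ∈ s, InCone l h (f a)) :
    InCone l h (∑ a ∈ s, f a) := by
  classical
  induction s using Finset.induction with
  | empty => simpa using InCone.zero l h
  | insert a s hni ih =>
    rw [Finset.sum_insert hni]
    exact InCone.add (hf a (Finset.mem_insert_self a s))
      (ih fun b hb => hf b (Finset.mem_insert_of_mem hb))

lemma exp_mul_exp_real (t s : ℝ) (c : ℂ) :
    Complex.exp (-(t:ℂ)*Complex.I) * (c * Complex.exp ((s:ℂ)*Complex.I))
      = c * Complex.exp ((((s - t : ℝ)):ℂ)*Complex.I) := by
  rw [mul_comm (Complex.exp _) _, mul_assoc, ← Complex.exp_add]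
  congr 1
  push_cast; ring

lemma im_aux (t s : ℝ) (c : ℝ) :
    (Complex.exp (-(t:ℂ)*Complex.I) * ((c:ℂ) * Complex.exp ((s:ℂ)*Complex.I))).im
      = c * Real.sin (s - t) := by
  rw [exp_mul_exp_real, Complex.mul_im, Complex.ofReal_re, Complex.ofReal_im,
    Complex.exp_ofReal_mul_I_im]
  ring

lemma re_aux (t s : ℝ) (c : ℝ) :
    (Complex.exp (-(t:ℂ)*Complex.I) * ((c:ℂ) * Complex.exp ((s:ℂ)*Complex.I))).re
      = c * Real.cos (s - t) := by
  rw [exp_mul_exp_real, Complex.mul_re, Complex.ofReal_re, Complex.ofReal_im,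
    Complex.exp_ofReal_mul_I_re]
  ring

lemma mul_exp_im (x : ℝ) (z : ℂ) :
    (Complex.exp ((x:ℂ)*Complex.I) * z).im = Real.cos x * z.im + Real.sin x * z.re := by
  rw [Complex.mul_im, Complex.exp_ofReal_mul_I_re, Complex.exp_ofReal_mul_I_im]

lemma mul_exp_re (x : ℝ) (z : ℂ) :
    (Complex.exp ((x:ℂ)*Complex.I) * z).re = Real.cos x * z.re - Real.sin x * z.im := by
  rw [Complex.mul_re, Complex.exp_ofReal_mul_I_re, Complex.exp_ofReal_mul_I_im]

lemma InCone.ray {l h : ℝ} (hpi : h - l ≤ π) {c : ℝ} (hc : 0 ≤ c)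
    {ψ : ℝ} (h1 : l ≤ ψ) (h2 : ψ ≤ h) :
    InCone l h ((c:ℂ) * Complex.exp ((ψ:ℂ)*Complex.I)) := by
  refine ⟨?_, ?_, ?_⟩
  · rw [im_aux]
    exact mul_nonneg hc (Real.sin_nonneg_of_nonneg_of_le_pi (by linarith) (by linarith))
  · rw [im_aux]
    have : Real.sin (ψ - h) ≤ 0 := by
      have := Real.sin_nonneg_of_nonneg_of_le_pi (x := -(ψ - h)) (by linarith) (by linarith)
      rw [Real.sin_neg] at this; linarith
    exact mul_nonpos_of_nonneg_of_nonpos hc this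
  · rw [re_aux]
    refine mul_nonneg hc (Real.cos_nonneg_of_mem_Icc ⟨by linarith, by linarith⟩)

lemma InCone.eblock {θ0 : ℝ} {w : ℂ} {s : ℝ} (hw : ‖w‖ ≤ s) :
    InCone (θ0 - π/2) (θ0 + π/2) (Complex.exp ((θ0:ℂ)*Complex.I) * ((s:ℂ) + w)) := by
  have hre : -s ≤ w.re ∧ w.re ≤ s :=
    ⟨by linarith [neg_abs_le w.re, Complex.abs_re_le_norm w],
     by linarith [le_abs_self w.re, Complex.abs_re_le_norm w]⟩
  have key : ∀ t : ℝ, Complex.exp (-(t:ℂ)*Complex.I) * (Complex.exp ((θ0:ℂ)*Complex.I) * ((s:ℂ) + w))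
      = Complex.exp ((((θ0 - t : ℝ)):ℂ)*Complex.I) * ((s:ℂ) + w) := by
    intro t
    rw [← mul_assoc, ← Complex.exp_add]
    congr 1
    push_cast; ring
  refine ⟨?_, ?_, ?_⟩
  · rw [key, show ((θ0 - (θ0 - π/2) : ℝ)) = (π/2:ℝ) by ring, mul_exp_im,
      Real.cos_pi_div_two, Real.sin_pi_div_two]
    simp [Complex.add_re]
    linarith [hre.1]
  · rw [key, show ((θ0 - (θ0 + π/2) : ℝ)) = (-(π/2):ℝ) by ring, mul_exp_im,
      Real.cos_neg, Real.sin_neg, Real.cos_pi_div_two, Real.sin_pi_div_two]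
    simp [Complex.add_re]
    linarith [hre.1]
  · rw [key, show ((θ0 - (θ0 - π/2 + (θ0 + π/2))/2 : ℝ)) = (0:ℝ) by ring, mul_exp_re,
      Real.cos_zero, Real.sin_zero]
    simp [Complex.add_re]
    linarith [hre.1]

lemma InCone.extract {l h : ℝ} (hlh : l ≤ h) (hpi : h - l ≤ π) {z : ℂ} (hz : z ≠ 0)
    (hc : InCone l h z) :
    ∃ ψ : ℝ, l ≤ ψ ∧ ψ ≤ h ∧ z = (‖z‖ : ℂ) * Complex.exp ((ψ:ℂ)*Complex.I) := by
  obtain ⟨h1, h2, h3⟩ := hc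
  have hwz : Complex.exp (-(l:ℂ)*Complex.I) * z ≠ 0 := mul_ne_zero (Complex.exp_ne_zero _) hz
  have habs : ‖Complex.exp (-(l:ℂ)*Complex.I) * z‖ = ‖z‖ := by
    rw [norm_mul,
      show -(l:ℂ)*Complex.I = ((-l : ℝ):ℂ)*Complex.I by push_cast; ring,
      Complex.norm_exp_ofReal_mul_I, one_mul]
  set t := Complex.arg (Complex.exp (-(l:ℂ)*Complex.I) * z) with ht
  have ht0 : 0 ≤ t := Complex.arg_nonneg_iff.mpr h1
  have htpi : t ≤ π := Complex.arg_le_pi _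
  have hzw : z = (‖z‖ : ℂ) * Complex.exp (((l + t : ℝ):ℂ)*Complex.I) := by
    have h5 : Complex.exp (-(l:ℂ)*Complex.I) * z
        = (‖z‖ : ℂ) * Complex.exp ((t:ℂ)*Complex.I) := by
      rw [← habs, ht]
      exact (Complex.norm_mul_exp_arg_mul_I _).symm
    have hz' : z = Complex.exp ((l:ℂ)*Complex.I) * (Complex.exp (-(l:ℂ)*Complex.I) * z) := by
      rw [← mul_assoc, ← Complex.exp_add,
        show (l:ℂ)*Complex.I + -(l:ℂ)*Complex.I = 0 by ring, Complex.exp_zero, one_mul]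
    symm
    calc (‖z‖ : ℂ) * Complex.exp (((l + t : ℝ):ℂ)*Complex.I)
        = Complex.exp ((l:ℂ)*Complex.I) * ((‖z‖ : ℂ) * Complex.exp ((t:ℂ)*Complex.I)) := by
          rw [mul_left_comm, ← Complex.exp_add]
          congr 2
          push_cast; ring
      _ = Complex.exp ((l:ℂ)*Complex.I) * (Complex.exp (-(l:ℂ)*Complex.I) * z) := by rw [h5]
      _ = z := hz'.symm
  refine ⟨l + t, by linarith, ?_, hzw⟩
  by_contra hcon
  push_neg at hcon
  have habspos : 0 < ‖z‖ := norm_pos_iff.mpr hz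
  have h3' : 0 ≤ ‖z‖ * Real.cos (l + t - (l+h)/2) := by
    rw [← re_aux ((l+h)/2) (l+t) (‖z‖), ← hzw]; exact h3
  have h2' : ‖z‖ * Real.sin (l + t - h) ≤ 0 := by
    rw [← im_aux h (l+t) (‖z‖), ← hzw]; exact h2
  have hcos : 0 ≤ Real.cos (l + t - (l+h)/2) := by
    by_contra hcc
    push_neg at hcc
    nlinarith
  have hub : l + t - (l+h)/2 ≤ π/2 := by
    by_contra hcc
    push_neg at hcc
    have := Real.cos_neg_of_pi_div_two_lt_of_lt hcc (by linarith)
    linarith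
  have hsin : 0 < Real.sin (l + t - h) :=
    Real.sin_pos_of_pos_of_lt_pi (by linarith) (by linarith)
  nlinarith

-- ============ dot-product helpers ============

lemma dot_conjT {ι : Type*} [Fintype ι] (M : Matrix ι ι ℂ) (x v : ι → ℂ) :
    star x ⬝ᵥ Mᴴ.mulVec v = star (M.mulVec x) ⬝ᵥ v := by
  rw [Matrix.star_mulVec, dotProduct_mulVec]

lemma star_dot_comm {ι : Type*} [Fintype ι] (a b : ι → ℂ) :
    star a ⬝ᵥ b = (starRingEnd ℂ) (star b ⬝ᵥ a) := by
  simp only [dotProduct, Pi.star_apply, Complex.star_def, map_sum]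
  congr 1
  ext i
  rw [RingHom.map_mul, Complex.conj_conj]
  ring

lemma dot_self_real {ι : Type*} [Fintype ι] (v : ι → ℂ) :
    star v ⬝ᵥ v = ((∑ i, Complex.normSq (v i) : ℝ) : ℂ) := by
  push_cast
  simp only [dotProduct, Pi.star_apply, Complex.star_def]
  congr 1
  ext i
  rw [← Complex.normSq_eq_conj_mul_self]

lemma dot_congr {ι : Type*} [Fintype ι] (P D : Matrix ι ι ℂ) (x : ι → ℂ) :
    star x ⬝ᵥ (Pᴴ * D * P).mulVec x = star (P.mulVec x) ⬝ᵥ D.mulVec (P.mulVec x) := by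
  rw [← Matrix.mulVec_mulVec, ← Matrix.mulVec_mulVec, dot_conjT]

lemma dot_reindex {ι κ : Type*} [Fintype ι] [Fintype κ] [DecidableEq ι] [DecidableEq κ]
    (e : κ ≃ ι) (M : Matrix κ κ ℂ) (z : ι → ℂ) :
    star z ⬝ᵥ (Matrix.reindex e e M).mulVec z
      = star (fun k => z (e k)) ⬝ᵥ M.mulVec (fun k => z (e k)) := by
  simp only [dotProduct, Matrix.mulVec, Matrix.reindex_apply, Matrix.submatrix_apply,
    Pi.star_apply]
  rw [← Equiv.sum_comp e (fun i => star (z i) * ∑ j, M (e.symm i) (e.symm j) * z j)]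
  simp only [Equiv.symm_apply_apply]
  congr 1
  ext k
  congr 1
  rw [← Equiv.sum_comp e (fun j => M k (e.symm j) * z j)]
  simp only [Equiv.symm_apply_apply]

lemma reindex_blocks_mulVec {k r n : ℕ} (e : (Fin k ⊕ Fin r) ≃ Fin n)
    (Cs : Matrix (Fin r) (Fin r) ℂ) (w : Fin n → ℂ) :
    (Matrix.reindex e e (Matrix.fromBlocks (0 : Matrix (Fin k) (Fin k) ℂ) 0 0 Cs)).mulVec w
      = fun i => Sum.elim (fun _ => (0:ℂ)) (fun b => Cs.mulVec (fun j => w (e (Sum.inr j))) b)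
          (e.symm i) := by
  ext i
  simp only [Matrix.mulVec, dotProduct, Matrix.reindex_apply, Matrix.submatrix_apply]
  rw [← Equiv.sum_comp e (fun j => (Matrix.fromBlocks (0 : Matrix (Fin k) (Fin k) ℂ) 0 0 Cs)
    (e.symm i) (e.symm j) * w j)]
  simp only [Equiv.symm_apply_apply]
  rcases he : e.symm i with a | b
  · simp [Fintype.sum_sum_type]
  · simp [Fintype.sum_sum_type, Matrix.mulVec, dotProduct]

-- ============ quadratic form of the gsd middle factor ============

lemma gsd_form (n0 m p : ℕ) (θ : Fin m → ℝ) (θ0 : ℝ)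
    (z : ((Fin n0 ⊕ Fin m) ⊕ (Fin 2 × Fin p)) → ℂ) :
    star z ⬝ᵥ (gsdMat n0 m p θ θ0).mulVec z
      = (∑ i : Fin m, ((Complex.normSq (z (Sum.inl (Sum.inr i))) : ℝ) : ℂ)
            * Complex.exp ((θ i : ℂ) * Complex.I))
        + ∑ k : Fin p, Complex.exp ((θ0:ℂ) * Complex.I) *
            (((Complex.normSq (z (Sum.inr (0, k))) + Complex.normSq (z (Sum.inr (1, k))) : ℝ) : ℂ)
              + 2 * (starRingEnd ℂ) (z (Sum.inr (0, k))) * z (Sum.inr (1, k))) := by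
  simp only [dotProduct, Matrix.mulVec, gsdMat, Fintype.sum_sum_type, Pi.star_apply,
    Matrix.fromBlocks_apply₁₁, Matrix.fromBlocks_apply₁₂, Matrix.fromBlocks_apply₂₁,
    Matrix.fromBlocks_apply₂₂, Matrix.zero_apply, Fintype.sum_prod_type,
    Matrix.blockDiagonal_apply, Matrix.diagonal_apply]
  simp only [zero_mul, Finset.sum_const_zero, add_zero, zero_add, mul_zero, ite_mul,
    Finset.sum_ite_eq, Finset.mem_univ, if_true, Fin.sum_univ_two, Matrix.smul_apply,
    Matrix.cons_val', Matrix.cons_val_zero, Matrix.cons_val_one, Matrix.head_cons,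
    Matrix.head_fin_const, Matrix.empty_val', Matrix.cons_val_fin_one, smul_eq_mul]
  rw [← Finset.sum_add_distrib]
  congr 1
  · apply Finset.sum_congr rfl
    intro i _
    rw [Complex.normSq_eq_conj_mul_self]
    simp only [Complex.star_def]
    ring
  · apply Finset.sum_congr rfl
    intro k _
    push_cast
    rw [Complex.normSq_eq_conj_mul_self, Complex.normSq_eq_conj_mul_self]
    simp only [Complex.star_def]
    rw [show !![(1:ℂ),2;0,1] 0 0 = 1 by simp, show !![(1:ℂ),2;0,1] 0 1 = 2 by simp,
      show !![(1:ℂ),2;0,1] 1 0 = 0 by simp, show !![(1:ℂ),2;0,1] 1 1 = 1 by simp]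
    ring

lemma InCone.gsd {l h : ℝ} (hpi : h - l ≤ π) {n0 m p : ℕ} {θ : Fin m → ℝ} {θ0 : ℝ}
    (hθ : ∀ i, l ≤ θ i ∧ θ i ≤ h) (hp : p ≠ 0 → l = θ0 - π/2 ∧ h = θ0 + π/2)
    (z : ((Fin n0 ⊕ Fin m) ⊕ (Fin 2 × Fin p)) → ℂ) :
    InCone l h (star z ⬝ᵥ (gsdMat n0 m p θ θ0).mulVec z) := by
  rw [gsd_form]
  apply InCone.add
  · exact InCone.sum fun i _ => InCone.ray hpi (Complex.normSq_nonneg _) (hθ i).1 (hθ i).2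
  · apply InCone.sum
    intro k _
    have hp0 : p ≠ 0 := fun hc => absurd k.2 (by omega)
    obtain ⟨hl, hh⟩ := hp hp0
    rw [hl, hh]
    apply InCone.eblock
    set a := z (Sum.inr (0, k)); set b := z (Sum.inr (1, k))
    have habs : ‖2 * (starRingEnd ℂ) a * b‖ = 2 * ‖a‖ * ‖b‖ := by
      rw [norm_mul, norm_mul, Complex.norm_conj]
      norm_num
    rw [habs]
    have h1 : Complex.normSq a = ‖a‖ ^ 2 := (Complex.sq_norm a).symm
    have h2 : Complex.normSq b = ‖b‖ ^ 2 := (Complex.sq_norm b).symm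
    rw [h1, h2]
    nlinarith [sq_nonneg (‖a‖ - ‖b‖), norm_nonneg a,
      norm_nonneg b]

-- ============ quasi-sectorial nondegeneracy ============

lemma quasi_key {n : ℕ} (A N T : Matrix (Fin n) (Fin n) ℂ) (hA : QuasiSectorial A)
    (hT : IsUnit T.det) (hAe : A = Tᴴ * N * T) (y : Fin n → ℂ)
    (hq : star y ⬝ᵥ N.mulVec y = 0) (hNy : N.mulVec y ≠ 0) : False := by
  obtain ⟨k, r, e, U, Cs, hU1, hU2, hCs, hAdec⟩ := hA
  set x := T⁻¹.mulVec y with hx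
  have hTx : T.mulVec x = y := by
    rw [hx, Matrix.mulVec_mulVec, Matrix.mul_nonsing_inv _ hT, Matrix.one_mulVec]
  have hformA : star x ⬝ᵥ A.mulVec x = 0 := by
    rw [hAe, dot_congr, hTx]
    exact hq
  have hAx : A.mulVec x ≠ 0 := by
    rw [hAe, show (Tᴴ * N * T).mulVec x = Tᴴ.mulVec (N.mulVec (T.mulVec x)) by
      rw [← Matrix.mulVec_mulVec, ← Matrix.mulVec_mulVec], hTx]
    intro hc
    apply hNy
    have hTH : IsUnit (Tᴴ).det := by
      rw [Matrix.det_conjTranspose]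
      exact hT.star
    have h6 := congrArg (fun v => (Tᴴ)⁻¹.mulVec v) hc
    simpa [Matrix.mulVec_mulVec, ← Matrix.mul_assoc, Matrix.nonsing_inv_mul _ hTH,
      Matrix.one_mulVec] using h6
  set D := (Matrix.reindex e e (Matrix.fromBlocks (0 : Matrix (Fin k) (Fin k) ℂ) 0 0 Cs)) with hD
  set w := Uᴴ.mulVec x with hw
  have hUform := dot_congr Uᴴ D x
  rw [Matrix.conjTranspose_conjTranspose] at hUform
  have hformD : star w ⬝ᵥ D.mulVec w = 0 := by
    rw [hw, ← hUform, ← hAdec]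
    exact hformA
  have hDw : D.mulVec w ≠ 0 := by
    intro hc
    apply hAx
    rw [hAdec, show (U * D * Uᴴ).mulVec x = U.mulVec (D.mulVec (Uᴴ.mulVec x)) by
      rw [← Matrix.mulVec_mulVec, ← Matrix.mulVec_mulVec], ← hw, hc]
    simp
  set w2 : Fin r → ℂ := fun i => w (e (Sum.inr i)) with hw2
  have hform2 : star w2 ⬝ᵥ Cs.mulVec w2 = 0 := by
    rw [← hformD, hD, dot_reindex]
    simp only [dotProduct, Matrix.mulVec, Fintype.sum_sum_type, Pi.star_apply,
      Matrix.fromBlocks_apply₁₁, Matrix.fromBlocks_apply₁₂, Matrix.fromBlocks_apply₂₁,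
      Matrix.fromBlocks_apply₂₂, Matrix.zero_apply, zero_mul, Finset.sum_const_zero,
      add_zero, zero_add, mul_zero]
    rfl
  have hw2ne : w2 ≠ 0 := by
    intro hc
    apply hDw
    rw [hD, reindex_blocks_mulVec]
    ext i
    rcases he : e.symm i with a | b
    · simp [he]
    · have : Cs.mulVec w2 = 0 := by rw [hc]; ext j; simp [Matrix.mulVec, dotProduct]
      rw [← hw2] at *
      simp [he, this]
  apply hCs
  have hS : (0:ℝ) < ∑ i, Complex.normSq (w2 i) := by
    have hex : ∃ i, w2 i ≠ 0 := by
      by_contra hc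
      push_neg at hc
      exact hw2ne (funext fun i => hc i)
    obtain ⟨i, hi⟩ := hex
    have : 0 < Complex.normSq (w2 i) := Complex.normSq_pos.mpr hi
    exact Finset.sum_pos' (fun j _ => Complex.normSq_nonneg _) ⟨i, Finset.mem_univ i, this⟩
  set c : ℝ := (Real.sqrt (∑ i, Complex.normSq (w2 i)))⁻¹ with hc
  have hcpos : 0 < c := by
    rw [hc]
    exact inv_pos.mpr (Real.sqrt_pos.mpr hS)
  refine ⟨fun i => (c:ℂ) * w2 i, ?_, ?_⟩
  · have : star (fun i => (c:ℂ) * w2 i) ⬝ᵥ (fun i => (c:ℂ) * w2 i)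
        = ((c^2 : ℝ) : ℂ) * (star w2 ⬝ᵥ w2) := by
      simp only [dotProduct, Pi.star_apply, star_mul', Complex.star_def,
        Complex.conj_ofReal, Finset.mul_sum]
      congr 1; ext i; push_cast; ring
    rw [this, dot_self_real]
    rw [← Complex.ofReal_mul]
    rw [show c^2 * (∑ i, Complex.normSq (w2 i)) = 1 by
      rw [hc, inv_pow, Real.sq_sqrt hS.le, inv_mul_cancel₀ hS.ne']]
    norm_num
  · have heq2 : star (fun i => (c:ℂ) * w2 i) ⬝ᵥ Cs.mulVec (fun i => (c:ℂ) * w2 i)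
        = ((c^2 : ℝ) : ℂ) * (star w2 ⬝ᵥ Cs.mulVec w2) := by
      have hmv : Cs.mulVec (fun i => (c:ℂ) * w2 i) = fun i => (c:ℂ) * Cs.mulVec w2 i := by
        ext i
        simp only [Matrix.mulVec, dotProduct, Finset.mul_sum]
        congr 1; ext j; ring
      rw [hmv]
      simp only [dotProduct, Pi.star_apply, star_mul', Complex.star_def,
        Complex.conj_ofReal, Finset.mul_sum]
      congr 1; ext i; push_cast; ring
    rw [heq2, hform2, mul_zero]

-- ============ eigenvector extraction ============

lemma eig_exists {n : ℕ} (M : Matrix (Fin n) (Fin n) ℂ) (lam : ℂ) (h : lam ∈ M.charpoly.roots) :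
    ∃ v, v ≠ 0 ∧ M.mulVec v = lam • v := by
  have h1 : (M.charpoly).eval lam = 0 := Polynomial.isRoot_of_mem_roots h
  have h2 : ((Matrix.diagonal (fun _ : Fin n => lam)) - M).det = 0 := by
    have heq : (M.charpoly).eval lam = ((charmatrix M).map (Polynomial.evalRingHom lam)).det := by
      show (Polynomial.evalRingHom lam) M.charmatrix.det = _
      rw [RingHom.map_det]
      rfl
    rw [heq] at h1
    rw [← h1]
    congr 1
    ext i j
    by_cases hij : i = j <;>
      simp [charmatrix_apply, Matrix.diagonal_apply, Matrix.sub_apply, hij]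
  rw [← Matrix.exists_mulVec_eq_zero_iff] at h2
  obtain ⟨v, hv, hv2⟩ := h2
  refine ⟨v, hv, ?_⟩
  rw [Matrix.sub_mulVec] at hv2
  have hd : (Matrix.diagonal (fun _ : Fin n => lam)).mulVec v = lam • v := by
    ext i; simp [Matrix.mulVec_diagonal]
  rw [hd] at hv2
  exact (sub_eq_zero.mp hv2).symm

-- ============ phase endpoints from the multiset identity ============

lemma phases_bounds {r : ℕ} (hr : 0 < r) (φ : Fin r → ℝ) (hmono : Antitone φ)
    {m p : ℕ} {θ : Fin m → ℝ} {θ0 : ℝ}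
    (hθ : ∀ i, θ0 - π/2 ≤ θ i ∧ θ i ≤ θ0 + π/2)
    (hmul : Multiset.map φ Finset.univ.val =
      Multiset.map θ Finset.univ.val + Multiset.replicate p (θ0 + π/2)
        + Multiset.replicate p (θ0 - π/2)) :
    (∀ i, φ ⟨r-1, by omega⟩ ≤ θ i ∧ θ i ≤ φ ⟨0, hr⟩) ∧
    (p ≠ 0 → φ ⟨r-1, by omega⟩ = θ0 - π/2 ∧ φ ⟨0, hr⟩ = θ0 + π/2) ∧
    φ ⟨r-1, by omega⟩ ≤ φ ⟨0, hr⟩ ∧ φ ⟨0, hr⟩ - φ ⟨r-1, by omega⟩ ≤ π := by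
  have hφle : ∀ j : Fin r, φ ⟨r-1, by omega⟩ ≤ φ j ∧ φ j ≤ φ ⟨0, hr⟩ := by
    intro j
    constructor
    · exact hmono (by rw [Fin.le_def]; simp; omega)
    · exact hmono (by rw [Fin.le_def]; simp)
  -- every element of the RHS multiset is attained by φ
  have hmem : ∀ a : ℝ, a ∈ (Multiset.map θ Finset.univ.val + Multiset.replicate p (θ0 + π/2)
        + Multiset.replicate p (θ0 - π/2)) → ∃ j : Fin r, φ j = a := by
    intro a ha
    rw [← hmul, Multiset.mem_map] at ha
    obtain ⟨j, _, hj⟩ := ha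
    exact ⟨j, hj⟩
  -- every element of the RHS multiset is within [θ0-π/2, θ0+π/2]
  have hbound : ∀ a : ℝ, a ∈ (Multiset.map θ Finset.univ.val + Multiset.replicate p (θ0 + π/2)
        + Multiset.replicate p (θ0 - π/2)) → θ0 - π/2 ≤ a ∧ a ≤ θ0 + π/2 := by
    intro a ha
    rcases Multiset.mem_add.mp ha with ha' | ha'
    · rcases Multiset.mem_add.mp ha' with ha'' | ha''
      · rw [Multiset.mem_map] at ha''
        obtain ⟨i, _, hi⟩ := ha''
        rw [← hi]
        exact hθ i
      · rw [Multiset.eq_of_mem_replicate ha'']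
        constructor <;> linarith [Real.pi_pos]
    · rw [Multiset.eq_of_mem_replicate ha']
      constructor <;> linarith [Real.pi_pos]
  -- φ values are in the multiset
  have hφmem : ∀ j : Fin r, θ0 - π/2 ≤ φ j ∧ φ j ≤ θ0 + π/2 := by
    intro j
    apply hbound
    rw [← hmul, Multiset.mem_map]
    exact ⟨j, Finset.mem_univ_val j, rfl⟩
  have hθb : ∀ i, φ ⟨r-1, by omega⟩ ≤ θ i ∧ θ i ≤ φ ⟨0, hr⟩ := by
    intro i
    have : θ i ∈ (Multiset.map θ Finset.univ.val + Multiset.replicate p (θ0 + π/2)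
        + Multiset.replicate p (θ0 - π/2)) := by
      rw [Multiset.mem_add]
      left
      rw [Multiset.mem_add]
      left
      rw [Multiset.mem_map]
      exact ⟨i, Finset.mem_univ_val i, rfl⟩
    obtain ⟨j, hj⟩ := hmem _ this
    rw [← hj]
    exact hφle j
  refine ⟨hθb, ?_, (hφle ⟨0, hr⟩).1, by
    have h1 := hφmem ⟨0, hr⟩
    have h2 := hφmem ⟨r-1, by omega⟩
    linarith⟩
  intro hp
  have hp' : 0 < p := Nat.pos_of_ne_zero hp
  have hmemhi : ∃ j : Fin r, φ j = θ0 + π/2 := by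
    apply hmem
    rw [Multiset.mem_add]
    left
    rw [Multiset.mem_add]
    right
    exact Multiset.mem_replicate.mpr ⟨hp, rfl⟩
  have hmemlo : ∃ j : Fin r, φ j = θ0 - π/2 := by
    apply hmem
    rw [Multiset.mem_add]
    right
    exact Multiset.mem_replicate.mpr ⟨hp, rfl⟩
  obtain ⟨j1, hj1⟩ := hmemhi
  obtain ⟨j2, hj2⟩ := hmemlo
  constructor
  · have := (hφle j2).1
    have := (hφmem ⟨r-1, by omega⟩).1
    linarith
  · have := (hφle j1).2
    have := (hφmem ⟨0, hr⟩).2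
    linarith

end Aux

/-- every nonzero eigenvalue `λ` of `AB`, with `A` quasi-sectorial and `B`
semi-sectorial, has an argument `a` (for a suitable branch) satisfying
`φ̲(A) + φ̲(B) ≤ a ≤ φ̄(A) + φ̄(B)`. -/
theorem product_eig_arg_bounds {n rA rB : ℕ} (A B : Matrix (Fin n) (Fin n) ℂ)
    (hA : QuasiSectorial A) (hB : SemiSectorial B)
    (hrA : 0 < rA) (hrB : 0 < rB)
    (φA : Fin rA → ℝ) (φB : Fin rB → ℝ)
    (hφA : HasPhases A φA) (hφB : HasPhases B φB) :
    ∀ lam ∈ (A * B).charpoly.roots, lam ≠ 0 →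
      ∃ a : ℝ, lam = ((‖lam‖ : ℝ) : ℂ) * Complex.exp ((a : ℂ) * Complex.I) ∧
        φA ⟨rA - 1, by omega⟩ + φB ⟨rB - 1, by omega⟩ ≤ a ∧
        a ≤ φA ⟨0, hrA⟩ + φB ⟨0, hrB⟩ := by
  intro lam hroot hlam
  obtain ⟨x, hx0, hxeq⟩ := eig_exists (A * B) lam hroot
  obtain ⟨hmonoA, n0A, mA, pA, θA, θ0A, eA, S, hSdet, hθA, hAdec, hmulA⟩ := hφA
  obtain ⟨hmonoB, n0B, mB, pB, θB, θ0B, eB, T, hTdet, hθB, hBdec, hmulB⟩ := hφB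
  obtain ⟨hθbA, hpA, hlhA, hpiA⟩ := phases_bounds hrA φA hmonoA hθA hmulA
  obtain ⟨hθbB, hpB, hlhB, hpiB⟩ := phases_bounds hrB φB hmonoB hθB hmulB
  set MA := Matrix.reindex eA eA (gsdMat n0A mA pA θA θ0A) with hMA
  set MB := Matrix.reindex eB eB (gsdMat n0B mB pB θB θ0B) with hMB
  set u := T.mulVec x with hu
  set w := MB.mulVec u with hwdef
  set y := S.mulVec (Tᴴ.mulVec w) with hy
  set q2 := star u ⬝ᵥ MB.mulVec u with hq2
  set q1 := star y ⬝ᵥ MA.mulVec y with hq1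
  -- the eigen-equation in decomposed form
  have heigen : Sᴴ.mulVec (MA.mulVec y) = lam • x := by
    rw [hy, hwdef, hu]
    rw [hAdec, hBdec] at hxeq
    simpa only [← Matrix.mulVec_mulVec] using hxeq
  -- the key identity q1 = lam * conj q2
  have hkey : q1 = lam * (starRingEnd ℂ) q2 := by
    have e1 : q1 = star (Tᴴ.mulVec w) ⬝ᵥ Sᴴ.mulVec (MA.mulVec y) := by
      rw [hq1, dot_conjT S (Tᴴ.mulVec w) (MA.mulVec y), ← hy]
    have e2 : star (Tᴴ.mulVec w) ⬝ᵥ Sᴴ.mulVec (MA.mulVec y)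
        = lam * (star (Tᴴ.mulVec w) ⬝ᵥ x) := by
      rw [heigen, dotProduct_smul, smul_eq_mul]
    have e3 : star (Tᴴ.mulVec w) ⬝ᵥ x = star w ⬝ᵥ u := by
      have := dot_conjT Tᴴ w x
      rw [Matrix.conjTranspose_conjTranspose] at this
      rw [← this, hu]
    have e4 : star w ⬝ᵥ u = (starRingEnd ℂ) q2 := by
      rw [star_dot_comm, hq2, hwdef]
    rw [e1, e2, e3, e4]
  -- nondegeneracy
  have hq2ne : q2 ≠ 0 := by
    intro h0
    have hq10 : q1 = 0 := by rw [hkey, h0, map_zero, mul_zero]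
    by_cases hMAy : MA.mulVec y = 0
    · have h8 : lam • x = 0 := by rw [← heigen, hMAy]; simp
      rcases smul_eq_zero.mp h8 with h | h
      · exact hlam h
      · exact hx0 h
    · exact quasi_key A MA S hA hSdet hAdec y (by rw [← hq1]; exact hq10) hMAy
  have hconjne : (starRingEnd ℂ) q2 ≠ 0 := by
    intro hc
    apply hq2ne
    have := congrArg (starRingEnd ℂ) hc
    simpa using this
  have hq1ne : q1 ≠ 0 := by
    rw [hkey]
    exact mul_ne_zero hlam hconjne
  -- cone membership
  have hconeA : InCone (φA ⟨rA - 1, by omega⟩) (φA ⟨0, hrA⟩) q1 := by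
    rw [hq1, hMA, dot_reindex]
    exact InCone.gsd hpiA hθbA hpA _
  have hconeB : InCone (φB ⟨rB - 1, by omega⟩) (φB ⟨0, hrB⟩) q2 := by
    rw [hq2, hMB, dot_reindex]
    exact InCone.gsd hpiB hθbB hpB _
  obtain ⟨α, hα1, hα2, hαeq⟩ := InCone.extract hlhA hpiA hq1ne hconeA
  obtain ⟨β, hβ1, hβ2, hβeq⟩ := InCone.extract hlhB hpiB hq2ne hconeB
  -- final assembly
  set c1 := ‖q1‖ with hc1
  set c2 := ‖q2‖ with hc2
  have hc2pos : 0 < c2 := norm_pos_iff.mpr hq2ne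
  have hc2ne : ((c2 : ℝ) : ℂ) ≠ 0 := by
    simpa using hc2pos.ne'
  have hconj : (starRingEnd ℂ) q2
      = (c2 : ℂ) * Complex.exp (-(β:ℂ)*Complex.I) := by
    conv_lhs => rw [hβeq]
    rw [RingHom.map_mul, Complex.conj_ofReal, ← Complex.exp_conj]
    congr 1
    rw [RingHom.map_mul, Complex.conj_ofReal, Complex.conj_I]
    ring
  have hexp : Complex.exp ((α:ℂ)*Complex.I) * Complex.exp ((β:ℂ)*Complex.I)
      = Complex.exp (((α+β : ℝ):ℂ)*Complex.I) := by
    rw [← Complex.exp_add]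
    congr 1
    push_cast
    ring
  have hlameq : lam
      = ((c1 / c2 : ℝ) : ℂ) * Complex.exp ((((α + β : ℝ)):ℂ) * Complex.I) := by
    have hstep : lam = q1 * ((starRingEnd ℂ) q2)⁻¹ := by
      rw [hkey]
      field_simp
    rw [hstep, hαeq, hconj, mul_inv,
      show (Complex.exp (-(β:ℂ)*Complex.I))⁻¹ = Complex.exp ((β:ℂ)*Complex.I) by
        rw [← Complex.exp_neg]; congr 1; ring,
      ← hexp]
    push_cast
    field_simp
  have habslam : ‖lam‖ = c1 / c2 := by
    rw [hlameq, norm_mul, Complex.norm_real, Real.norm_eq_abs, Complex.norm_exp_ofReal_mul_I, mul_one]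
    exact abs_of_nonneg (div_nonneg (norm_nonneg _) hc2pos.le)
  refine ⟨α + β, ?_, add_le_add hα1 hβ1, add_le_add hα2 hβ2⟩
  rw [habslam]
  exact hlameq

end
end
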